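/- arXiv:1711.10820 — 5 statements merged into one kernel-verified Lean document; each statement's English description precedes it below -/
import Mathlib

section
/- In the greedy construction, writing σ'_k = red(a_{k+1}⋯a_{k+n−1}) and J_k = |{j ≤ k : σ'_j = σ'_k}|, the algorithm terminates at step k if and only if J_k = n+1, which holds if and only if σ_k := red(a_k⋯a_{k+n−1}) is the increasing permutation 12⋯n. -/
/-- `c_b`: shift values `≥ b` up by one. -/
def cshift (b x : ℕ) : ℕ := if x < b then x else x + 1

/-- the `i`-th smallest entry of `w` (1-based). -/
def nthSmallest (w : List ℕ) (i : ℕ) : ℕ := (List.insertionSort (· ≤ ·) w).getD (i - 1) 0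

/-- the new last letter of the `i`-th extension of `w`. -/
def extb (w : List ℕ) (i : ℕ) : ℕ :=
  if i ≤ w.length then nthSmallest w i else w.foldr max 0 + 1

/-- the `i`-th extension of `w`, `1 ≤ i ≤ w.length + 1`. -/
def ext (i : ℕ) (w : List ℕ) : List ℕ :=
  w.map (cshift (extb w i)) ++ [extb w i]

/-- reduced form: replace the `i`-th smallest entry by `i`. -/
def red (w : List ℕ) : List ℕ := w.map (fun x => (w.filter (· ≤ x)).length)

/-- `w` covers the `n`-permutation `p` (given in reduced form):
some length-`n` factor of `w` is order-isomorphic to `p`. -/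
def covers (w : List ℕ) (n : ℕ) (p : List ℕ) : Prop :=
  ∃ k, k + n ≤ w.length ∧ red ((w.drop k).take n) = p

/-- Boolean version of `covers`. -/
def coversB (w : List ℕ) (n : ℕ) (p : List ℕ) : Bool :=
  (List.range w.length).any fun k =>
    decide (k + n ≤ w.length) && decide (red ((w.drop k).take n) = p)

/-- one step of the greedy algorithm: append the smallest extension of the last
`n-1` letters whose order-isomorphism type is not yet a length-`n` factor;
return `none` if no extension is possible (termination). -/
def greedyStep (n : ℕ) (w : List ℕ) : Option (List ℕ) :=
  let s := w.drop (w.length - (n - 1))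
  match (List.range' 1 (s.length + 1)).find? (fun i => ! coversB w n (red (ext i s))) with
  | some i => some (w.map (cshift (extb s i)) ++ [extb s i])
  | none => none

/-- `greedy n k` is `Π'_{n,k}`, the word after `k` steps of the greedy algorithm
started from `12⋯(n-1)` (constant once the algorithm has terminated). -/
def greedy (n : ℕ) : ℕ → List ℕ
  | 0 => List.range' 1 (n - 1)
  | k + 1 =>
    match greedyStep n (greedy n k) with
    | some w => w
    | none => greedy n k

/-- the greedy algorithm performs exactly `k` steps and then terminates. -/
def terminatesAt (n k : ℕ) : Prop :=
  (∀ j < k, greedyStep n (greedy n j) ≠ none) ∧ greedyStep n (greedy n k) = none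

/-- the `i`-th letter `a_i` of a word (1-based). -/
def letter (w : List ℕ) (i : ℕ) : ℕ := w.getD (i - 1) 0

/-- `σ_k`, the reduced form of the length-`n` factor starting at position `k` (1-based). -/
def sigma (w : List ℕ) (n k : ℕ) : List ℕ := red ((w.drop (k - 1)).take n)

/-!
Read the run as a walk `σ'_0 → σ'_1 → ⋯ → σ'_k` on patterns of length `n - 1`: step `j + 1`
leaves `σ'_j` along one of its `n` extensions (the `i`-th extension of a word has a pattern that
depends only on `i` and the pattern of the word), creating the new pattern `σ_{j+1}`, and
arrives at `σ'_{j+1} = red(tail σ_{j+1})`. Let `v = σ'_k`. Since the created patterns are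
distinct, the departures from `v` are labelled injectively by the index `i ∈ [1, n]` of the
extension taken, and the arrivals at `v` by the first letter of the created pattern, which
together with `v` determines it. The algorithm stops at `k` iff all `n` extensions of `v` have
been used, i.e. iff `v` was left `n` times, i.e. iff `J_k = n + 1` (the visit at `k` is the
extra one). Every visit but the one at time `0` follows an arrival, and there are at most `n`
arrivals, so `J_k = n + 1` forces a visit at time `0`, whence `v = σ'_0 = 12⋯(n-1)`. By the
greedy minimality the departure along the top extension `12⋯n` comes after all other departures
from `v`, and it returns to `v`; so it is step `k`, and `σ_k = 12⋯n`. Conversely, if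
`σ_k = 12⋯n` then step `k` went from `12⋯(n-1)` back to itself along the top extension, after all
smaller extensions had been used.
-/

namespace Greedy

open List

def rank (l : List ℕ) (x : ℕ) : ℕ := l.countP (· ≤ x)

lemma red_eq_map_rank (l : List ℕ) : red l = l.map (rank l) := by
  simp [red, rank, countP_eq_length_filter]

lemma rank_mono (l : List ℕ) : Monotone (rank l) := fun _ _ hxy =>
  countP_mono_left fun _ _ h => by simp only [decide_eq_true_eq] at h ⊢; omega

lemma rank_cons (b : ℕ) (l : List ℕ) (x : ℕ) :
    rank (b :: l) x = rank l x + if b ≤ x then 1 else 0 := by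
  simp [rank, countP_cons]

lemma rank_append (l l' : List ℕ) (x : ℕ) : rank (l ++ l') x = rank l x + rank l' x :=
  countP_append

lemma rank_lt_rank {l : List ℕ} {x y : ℕ} (hy : y ∈ l) (hxy : x < y) :
    rank l x < rank l y := by
  obtain ⟨l₁, l₂, rfl⟩ := append_of_mem hy
  have h₁ := rank_mono l₁ hxy.le
  have h₂ := rank_mono l₂ hxy.le
  rw [rank_append, rank_append, rank_cons, rank_cons, if_neg hxy.not_ge, if_pos le_rfl]
  omega

lemma rank_le_rank_iff {l : List ℕ} {x y : ℕ} (hx : x ∈ l) : rank l x ≤ rank l y ↔ x ≤ y :=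
  ⟨fun h => not_lt.1 fun hyx => (rank_lt_rank hx hyx).not_ge h, fun h => rank_mono l h⟩

lemma rank_injOn (l : List ℕ) : Set.InjOn (rank l) {x | x ∈ l} := fun _ hx _ hy h =>
  le_antisymm ((rank_le_rank_iff hx).1 h.le) ((rank_le_rank_iff hy).1 h.ge)

lemma red_map_of_le_iff {l : List ℕ} {f : ℕ → ℕ}
    (hf : ∀ x ∈ l, ∀ y ∈ l, f x ≤ f y ↔ x ≤ y) : red (l.map f) = red l := by
  simp only [red_eq_map_rank, map_map]
  refine map_congr_left fun y hy => ?_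
  simp only [Function.comp_apply, rank, countP_map]
  exact countP_congr fun x hx => by simp [hf x hx y hy]

lemma red_map_cshift (b : ℕ) (l : List ℕ) : red (l.map (cshift b)) = red l :=
  red_map_of_le_iff fun _ _ _ _ => by unfold cshift; split_ifs <;> omega

lemma red_map_rank_of_subset {l l' : List ℕ} (h : l' ⊆ l) : red (l'.map (rank l)) = red l' :=
  red_map_of_le_iff fun _ hx _ _ => rank_le_rank_iff (h hx)

lemma red_red (l : List ℕ) : red (red l) = red l :=
  (congrArg red (red_eq_map_rank l)).trans (red_map_rank_of_subset (Subset.refl l))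

lemma red_take_red (l : List ℕ) (m : ℕ) : red ((red l).take m) = red (l.take m) := by
  rw [red_eq_map_rank l, ← map_take, red_map_rank_of_subset (take_subset m l)]

lemma red_drop_red (l : List ℕ) (m : ℕ) : red ((red l).drop m) = red (l.drop m) := by
  rw [red_eq_map_rank l, ← map_drop, red_map_rank_of_subset (drop_subset m l)]

lemma length_red (l : List ℕ) : (red l).length = l.length := by simp [red]

lemma nodup_red {l : List ℕ} (h : l.Nodup) : (red l).Nodup := by
  rw [red_eq_map_rank]
  exact h.map_on fun x hx y hy => rank_injOn l hx hy

lemma mem_Icc_of_mem_red {l : List ℕ} {x : ℕ} (h : x ∈ red l) : x ∈ Finset.Icc 1 l.length := by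
  rw [red_eq_map_rank] at h
  obtain ⟨y, hy, rfl⟩ := mem_map.1 h
  exact Finset.mem_Icc.2 ⟨countP_pos_iff.2 ⟨y, hy, by simp⟩, countP_le_length⟩

lemma cshift_ne (b x : ℕ) : cshift b x ≠ b := by unfold cshift; split_ifs <;> omega

lemma cshift_le_self_iff {b x : ℕ} : cshift b x ≤ b ↔ x < b := by
  unfold cshift; split_ifs <;> omega

lemma cshift_injective (b : ℕ) : Function.Injective (cshift b) := fun x y h => by
  unfold cshift at h; split_ifs at h <;> omega

def patExt (i : ℕ) (t : List ℕ) : List ℕ := t.map (cshift i) ++ [i]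

lemma getLast?_patExt (i : ℕ) (t : List ℕ) : (patExt i t).getLast? = some i := getLast?_concat

lemma eq_of_patExt_eq {i i' : ℕ} {t t' : List ℕ} (h : patExt i t = patExt i' t') : i = i' := by
  simpa [getLast?_patExt] using congrArg getLast? h

lemma red_take_patExt (i : ℕ) (t : List ℕ) : red ((patExt i t).take t.length) = red t := by
  rw [patExt, take_left' (length_map _), red_map_cshift]

lemma rank_cons_of_mem {b x : ℕ} {l : List ℕ} (hb : b ∉ l) (hx : x ∈ l) :
    rank (b :: l) x = cshift (rank l b + 1) (rank l x) := by
  have hxb : x ≠ b := fun h => hb (h ▸ hx)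
  rw [rank_cons]
  rcases hxb.lt_or_gt with hlt | hgt
  · have := rank_mono l hlt.le
    simp only [cshift, if_neg hlt.not_ge]
    split_ifs <;> omega
  · have := rank_lt_rank hx hgt
    simp only [cshift, if_pos hgt.le]
    split_ifs <;> omega

lemma red_cons {b : ℕ} {l : List ℕ} (hb : b ∉ l) :
    red (b :: l) = (rank l b + 1) :: (red l).map (cshift (rank l b + 1)) := by
  rw [red_eq_map_rank, red_eq_map_rank l, map_cons, map_map, rank_cons, if_pos le_rfl]
  exact congrArg _ (map_congr_left fun x hx => rank_cons_of_mem hb hx)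

lemma red_append_singleton {b : ℕ} {l : List ℕ} (hb : b ∉ l) :
    red (l ++ [b]) = patExt (rank l b + 1) (red l) := by
  have hrank : rank (l ++ [b]) = rank (b :: l) := funext fun x => by
    simp only [rank, countP_append, countP_cons, countP_nil]; omega
  have hcons := red_cons hb
  rw [red_eq_map_rank] at hcons ⊢
  rw [hrank, map_append, map_singleton, patExt]
  simp only [map_cons, cons.injEq] at hcons
  rw [hcons.1, hcons.2]

lemma countP_lt_getElem_of_pairwise_lt :
    ∀ {u : List ℕ}, u.Pairwise (· < ·) → ∀ {m : ℕ} (hm : m < u.length), u.countP (· < u[m]) = m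
  | a :: t, hu, 0, _ => by
    rw [pairwise_cons] at hu
    simpa [countP_eq_zero] using fun x hx => (hu.1 x hx).le
  | a :: t, hu, m + 1, hm => by
    rw [pairwise_cons] at hu
    have hm' : m < t.length := by simpa using hm
    simp [hu.1 _ (getElem_mem hm'), countP_lt_getElem_of_pairwise_lt hu.2 hm']

lemma countP_lt_extb {s : List ℕ} (hs : s.Nodup) {i : ℕ} (h1 : 1 ≤ i) (h2 : i ≤ s.length + 1) :
    s.countP (· < extb s i) = i - 1 := by
  rcases h2.lt_or_eq with h2 | rfl
  · set u := s.insertionSort (· ≤ ·)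
    have hperm : u.Perm s := perm_insertionSort _ s
    have hu : u.Pairwise (· < ·) :=
      ((pairwise_insertionSort _ s).and (hperm.nodup_iff.2 hs)).imp fun h => h.1.lt_of_ne h.2
    have hi : i - 1 < u.length := by rw [hperm.length_eq]; omega
    rw [extb, if_pos (by omega), nthSmallest, getD_eq_getElem _ _ hi, ← hperm.countP_eq,
      countP_lt_getElem_of_pairwise_lt hu hi]
  · rw [extb, if_neg (by omega), countP_eq_length.2 fun x hx => by
      simpa using Nat.lt_succ_of_le (le_max_of_le' 0 hx le_rfl)]
    simp

lemma red_ext {s : List ℕ} (hs : s.Nodup) {i : ℕ} (h1 : 1 ≤ i) (h2 : i ≤ s.length + 1) :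
    red (ext i s) = patExt i (red s) := by
  set b := extb s i
  have hb : b ∉ s.map (cshift b) := by simp [cshift_ne]
  have hrank : rank (s.map (cshift b)) b = i - 1 := by
    rw [rank, countP_map, ← countP_lt_extb hs h1 h2]
    exact countP_congr fun x _ => by simp only [Function.comp_apply, cshift_le_self_iff, b]
  rw [ext, red_append_singleton hb, hrank, red_map_cshift, Nat.sub_add_cancel h1]

lemma range'_one_succ (m : ℕ) : range' 1 (m + 1) = range' 1 m ++ [m + 1] := by
  rw [range'_concat, Nat.one_mul, Nat.add_comm]

lemma patExt_succ_range' (m : ℕ) : patExt (m + 1) (range' 1 m) = range' 1 (m + 1) := by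
  rw [patExt, range'_one_succ, map_congr_left fun x hx => ?_, map_id']
  rw [mem_range'_1] at hx
  simp only [cshift, if_pos (show x < m + 1 by omega)]

lemma red_range' (m : ℕ) : red (range' 1 m) = range' 1 m := by
  induction m with
  | zero => rfl
  | succ m ih =>
    have hrank : rank (range' 1 m) (m + 1) = m := by
      rw [rank, countP_eq_length.2 fun x hx => by
        rw [mem_range'_1] at hx; simp only [decide_eq_true_eq]; omega, length_range']
    rw [range'_one_succ, red_append_singleton (by rw [mem_range'_1]; omega), hrank, ih,
      ← range'_one_succ, patExt_succ_range']

lemma red_take_range' (m : ℕ) : red ((range' 1 (m + 1)).take m) = range' 1 m := by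
  rw [take_range'_of_length_ge (by omega), red_range']

lemma red_tail_range' (m : ℕ) : red (range' 1 (m + 1)).tail = range' 1 m := by
  rw [range'_succ, tail_cons, ← map_add_range', red_map_of_le_iff fun _ _ _ _ => by omega,
    red_range']

lemma eq_map_cshift_red_of_red_cons_eq_self {a : ℕ} {l : List ℕ} (ha : a ∉ l)
    (h : red (a :: l) = a :: l) : a = rank l a + 1 ∧ l = (red l).map (cshift a) := by
  rw [red_cons ha, cons.injEq] at h
  exact ⟨h.1.symm, h.1 ▸ h.2.symm⟩

lemma eq_of_head!_eq_of_red_tail_eq {p q : List ℕ} (hp : p.Nodup) (hq : q.Nodup)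
    (hrp : red p = p) (hrq : red q = q) (hhead : p.head! = q.head!)
    (htail : red p.tail = red q.tail) : p = q := by
  rcases p with _ | ⟨a, l⟩ <;> rcases q with _ | ⟨b, l'⟩
  · rfl
  · have := (eq_map_cshift_red_of_red_cons_eq_self (nodup_cons.1 hq).1 hrq).1
    simp only [head!_nil, head!_cons, Nat.default_eq_zero] at hhead; omega
  · have := (eq_map_cshift_red_of_red_cons_eq_self (nodup_cons.1 hp).1 hrp).1
    simp only [head!_nil, head!_cons, Nat.default_eq_zero] at hhead; omega
  · simp only [head!_cons, tail_cons] at hhead htail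
    subst hhead
    rw [(eq_map_cshift_red_of_red_cons_eq_self (nodup_cons.1 hp).1 hrp).2,
      (eq_map_cshift_red_of_red_cons_eq_self (nodup_cons.1 hq).1 hrq).2, htail]

lemma coversB_eq_true_iff {w : List ℕ} {n : ℕ} (hn : 0 < n) {p : List ℕ} :
    coversB w n p = true ↔ covers w n p := by
  simp only [coversB, covers, any_eq_true, mem_range, Bool.and_eq_true, decide_eq_true_eq]
  exact ⟨fun ⟨j, _, h⟩ => ⟨j, h⟩, fun ⟨j, h⟩ => ⟨j, by omega, h⟩⟩

lemma greedyStep_eq_none_iff {n : ℕ} {w : List ℕ} :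
    greedyStep n w = none ↔ ∀ i, 1 ≤ i → i ≤ (w.drop (w.length - (n - 1))).length + 1 →
      coversB w n (red (ext i (w.drop (w.length - (n - 1))))) = true := by
  unfold greedyStep; dsimp only
  split <;> rename_i hfind
  · simp only [reduceCtorEq, false_iff, not_forall]
    obtain ⟨hi, hmem, -⟩ := find?_range'_eq_some.1 hfind
    rw [mem_range'_1] at hmem
    exact ⟨_, hmem.1, by omega, by simpa using hi⟩
  · rw [find?_range'_eq_none] at hfind
    simp only [true_iff]
    exact fun i h1 h2 => by simpa using hfind i h1 (by omega)

lemma greedyStep_eq_some {n : ℕ} {w u : List ℕ} (h : greedyStep n w = some u) :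
    ∃ i, 1 ≤ i ∧ i ≤ (w.drop (w.length - (n - 1))).length + 1 ∧
      coversB w n (red (ext i (w.drop (w.length - (n - 1))))) = false ∧
      (∀ l, 1 ≤ l → l < i → coversB w n (red (ext l (w.drop (w.length - (n - 1))))) = true) ∧
      u = w.map (cshift (extb (w.drop (w.length - (n - 1))) i)) ++
        [extb (w.drop (w.length - (n - 1))) i] := by
  unfold greedyStep at h; dsimp only at h
  split at h <;> rename_i i hfind
  · obtain ⟨hi, hmem, hmin⟩ := find?_range'_eq_some.1 hfind
    rw [mem_range'_1] at hmem
    exact ⟨i, hmem.1, by omega, by simpa using hi, fun l h1 h2 => by simpa using hmin l h1 h2,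
      (Option.some.inj h).symm⟩
  · exact absurd h (by simp)

def Runs (n k : ℕ) : Prop := ∀ j < k, greedyStep n (greedy n j) ≠ none

lemma Runs.mono {n k j : ℕ} (h : Runs n k) (hj : j ≤ k) : Runs n j := fun i hi => h i (by omega)

lemma exists_greedy_succ_eq {n j : ℕ} (h : greedyStep n (greedy n j) ≠ none) :
    ∃ b, greedy n (j + 1) = (greedy n j).map (cshift b) ++ [b] := by
  obtain ⟨u, hu⟩ := Option.ne_none_iff_exists'.1 h
  obtain ⟨i, -, -, -, -, hi⟩ := greedyStep_eq_some hu
  exact ⟨_, (by simp [greedy, hu] : greedy n (j + 1) = u).trans hi⟩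

lemma length_greedy {n k : ℕ} (h : Runs n k) : (greedy n k).length = n - 1 + k := by
  induction k with
  | zero => simp [greedy]
  | succ k ih =>
    obtain ⟨b, hb⟩ := exists_greedy_succ_eq (h k k.lt_succ_self)
    rw [hb, length_append, length_map, ih (h.mono k.le_succ), length_singleton, Nat.add_assoc]

lemma nodup_greedy {n k : ℕ} (h : Runs n k) : (greedy n k).Nodup := by
  induction k with
  | zero => exact nodup_range'
  | succ k ih =>
    obtain ⟨b, hb⟩ := exists_greedy_succ_eq (h k k.lt_succ_self)
    rw [hb, nodup_append]
    exact ⟨(ih (h.mono k.le_succ)).map (cshift_injective b), nodup_singleton b,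
      by simp [cshift_ne]⟩

lemma red_factor_map_cshift_append {w v : List ℕ} {b p m : ℕ} (hpm : p + m ≤ w.length) :
    red (((w.map (cshift b) ++ v).drop p).take m) = red ((w.drop p).take m) := by
  rw [drop_append_of_le_length (by rw [length_map]; omega),
    take_append_of_le_length (by rw [length_drop, length_map]; omega),
    ← map_drop, ← map_take, red_map_cshift]

lemma red_factor_greedy {n k j p m : ℕ} (h : Runs n k) (hjk : j ≤ k) (hpm : p + m ≤ n - 1 + j) :
    red (((greedy n k).drop p).take m) = red (((greedy n j).drop p).take m) := by
  induction k, hjk using Nat.le_induction with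
  | base => rfl
  | succ k hjk ih =>
    obtain ⟨b, hb⟩ := exists_greedy_succ_eq (h k k.lt_succ_self)
    rw [hb, red_factor_map_cshift_append (by rw [length_greedy (h.mono k.le_succ)]; omega),
      ih (h.mono k.le_succ)]

/-- `sigma' n k j` is the paper's `σ'_j` and `newPattern n k j` its `σ_{j+1}`, both read off
`Π'_{n,k}` with 0-based `j`; `newPattern n k j` is the pattern created by step `j + 1`. -/
def sigma' (n k j : ℕ) : List ℕ := red (((greedy n k).drop j).take (n - 1))

def newPattern (n k j : ℕ) : List ℕ := red (((greedy n k).drop j).take n)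

def choice (n k j : ℕ) : ℕ := (newPattern n k j).getLast?.getD 0

section Patterns

variable {n k j : ℕ}

lemma sigma'_eq_red_take_newPattern : sigma' n k j = red ((newPattern n k j).take (n - 1)) := by
  rw [newPattern, red_take_red, take_take, Nat.min_eq_left (Nat.sub_le n 1), sigma']

lemma sigma'_succ : sigma' n k (j + 1) = red (newPattern n k j).tail := by
  rw [← drop_one, newPattern, red_drop_red, drop_take, drop_drop, sigma', Nat.add_comm]

lemma sigma'_zero (h : Runs n k) : sigma' n k 0 = range' 1 (n - 1) := by
  rw [sigma', red_factor_greedy (p := 0) h (Nat.zero_le k) (by omega)]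
  simp [greedy, red_range']

lemma length_newPattern (h : Runs n k) (hj : j < k) : (newPattern n k j).length = n := by
  rw [newPattern, length_red, length_take, length_drop, length_greedy h]; omega

lemma length_sigma' (h : Runs n k) (hj : j ≤ k) : (sigma' n k j).length = n - 1 := by
  rw [sigma', length_red, length_take, length_drop, length_greedy h]; omega

lemma red_sigma' : red (sigma' n k j) = sigma' n k j := red_red _

lemma red_newPattern : red (newPattern n k j) = newPattern n k j := red_red _

lemma nodup_newPattern (h : Runs n k) : (newPattern n k j).Nodup :=
  nodup_red (((take_sublist _ _).trans (drop_sublist _ _)).nodup (nodup_greedy h))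

lemma covers_greedy_iff (h : Runs n k) (hn : 0 < n) (hj : j ≤ k) {p : List ℕ} :
    covers (greedy n j) n p ↔ ∃ j' < j, newPattern n k j' = p := by
  rw [covers, length_greedy (h.mono hj)]
  refine exists_congr fun j' => ⟨fun ⟨hj', hp⟩ => ⟨by omega, ?_⟩, fun ⟨hj', hp⟩ => ⟨by omega, ?_⟩⟩
  · rwa [newPattern, red_factor_greedy h hj (by omega)]
  · rwa [newPattern, red_factor_greedy h hj (by omega)] at hp

lemma drop_greedy_eq (h : Runs n j) :
    (greedy n j).drop ((greedy n j).length - (n - 1)) = (greedy n j).drop j := by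
  rw [length_greedy h, Nat.add_sub_cancel_left]

lemma red_ext_drop_greedy (h : Runs n k) (hj : j ≤ k) {i : ℕ} (h1 : 1 ≤ i) (h2 : i ≤ n) :
    red (ext i ((greedy n j).drop j)) = patExt i (sigma' n k j) := by
  have hlen : ((greedy n j).drop j).length = n - 1 := by
    rw [length_drop, length_greedy (h.mono hj)]; omega
  rw [red_ext ((nodup_greedy (h.mono hj)).sublist (drop_sublist _ _)) h1 (by omega), sigma',
    red_factor_greedy h hj (by omega), ← hlen, take_length]

lemma greedyStep_greedy_eq_none_iff (h : Runs n k) (hn : 0 < n) :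
    greedyStep n (greedy n k) = none ↔
      ∀ i, 1 ≤ i → i ≤ n → ∃ j < k, newPattern n k j = patExt i (sigma' n k k) := by
  have hlen : ((greedy n k).drop k).length = n - 1 := by rw [length_drop, length_greedy h]; omega
  rw [greedyStep_eq_none_iff, drop_greedy_eq h, hlen]
  refine forall_congr' fun i => ⟨fun hi h1 h2 => ?_, fun hi h1 h2 => ?_⟩
  · rw [← red_ext_drop_greedy h le_rfl h1 h2, ← covers_greedy_iff h hn le_rfl,
      ← coversB_eq_true_iff hn]
    exact hi h1 (by omega)
  · rw [coversB_eq_true_iff hn, covers_greedy_iff h hn le_rfl,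
      red_ext_drop_greedy h le_rfl h1 (by omega)]
    exact hi h1 (by omega)

lemma exists_newPattern_eq_patExt (h : Runs n k) (hn : 0 < n) (hj : j < k) :
    ∃ i, 1 ≤ i ∧ i ≤ n ∧ newPattern n k j = patExt i (sigma' n k j) ∧
      (∀ l, 1 ≤ l → l < i → ∃ j' < j, newPattern n k j' = patExt l (sigma' n k j)) ∧
      ∀ j' < j, newPattern n k j' ≠ newPattern n k j := by
  have hrun : Runs n j := h.mono hj.le
  obtain ⟨u, hu⟩ := Option.ne_none_iff_exists'.1 (h j hj)
  have hsucc : greedy n (j + 1) = u := by simp [greedy, hu]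
  obtain ⟨i, h1, h2, hnew, hmin, rfl⟩ := greedyStep_eq_some hu
  have hlen : ((greedy n j).drop j).length = n - 1 := by
    rw [length_drop, length_greedy hrun]; omega
  rw [drop_greedy_eq hrun] at h2 hnew hmin hsucc
  rw [hlen] at h2
  have hfactor : ((greedy n (j + 1)).drop j).take n = ext i ((greedy n j).drop j) := by
    rw [hsucc, drop_append_of_le_length (by simp [length_greedy hrun]), ← map_drop,
      take_of_length_le (by rw [length_append, length_map, hlen, length_singleton]; omega), ext]
  have hpat : newPattern n k j = patExt i (sigma' n k j) := by
    rw [newPattern, red_factor_greedy (j := j + 1) h hj (by omega), hfactor,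
      red_ext_drop_greedy h hj.le h1 (by omega)]
  refine ⟨i, h1, by omega, hpat, fun l hl1 hl2 => ?_, fun j' hj' hj'eq => ?_⟩
  · rw [← red_ext_drop_greedy h hj.le hl1 (by omega), ← covers_greedy_iff h hn hj.le,
      ← coversB_eq_true_iff hn]
    exact hmin l hl1 hl2
  · rw [hpat, ← red_ext_drop_greedy h hj.le h1 (by omega)] at hj'eq
    exact Bool.false_ne_true <| hnew.symm.trans <|
      (coversB_eq_true_iff hn).2 ((covers_greedy_iff h hn hj.le).2 ⟨j', hj', hj'eq⟩)

lemma newPattern_ne_of_lt (h : Runs n k) (hn : 0 < n) {j' : ℕ} (hj' : j' < j) (hj : j < k) :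
    newPattern n k j' ≠ newPattern n k j := by
  obtain ⟨i, -, -, -, -, hnew⟩ := exists_newPattern_eq_patExt h hn hj
  exact hnew j' hj'

lemma choice_of_newPattern_eq_patExt {i : ℕ} {t : List ℕ} (h : newPattern n k j = patExt i t) :
    choice n k j = i := by
  rw [choice, h, getLast?_patExt, Option.getD_some]

lemma newPattern_eq_patExt_choice (h : Runs n k) (hn : 0 < n) (hj : j < k) :
    newPattern n k j = patExt (choice n k j) (sigma' n k j) := by
  obtain ⟨i, -, -, hi, -⟩ := exists_newPattern_eq_patExt h hn hj
  rwa [choice_of_newPattern_eq_patExt hi]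

lemma choice_mem_Icc (h : Runs n k) (hn : 0 < n) (hj : j < k) : choice n k j ∈ Finset.Icc 1 n := by
  obtain ⟨i, h1, h2, hi, -⟩ := exists_newPattern_eq_patExt h hn hj
  rw [choice_of_newPattern_eq_patExt hi, Finset.mem_Icc]
  exact ⟨h1, h2⟩

lemma exists_newPattern_eq_of_lt_choice (h : Runs n k) (hn : 0 < n) (hj : j < k) {l : ℕ}
    (hl1 : 1 ≤ l) (hl2 : l < choice n k j) :
    ∃ j' < j, newPattern n k j' = patExt l (sigma' n k j) := by
  obtain ⟨i, -, -, hi, hmin, -⟩ := exists_newPattern_eq_patExt h hn hj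
  exact hmin l hl1 (choice_of_newPattern_eq_patExt hi ▸ hl2)

lemma newPattern_injOn (h : Runs n k) (hn : 0 < n) : Set.InjOn (newPattern n k) (Set.Iio k) := by
  intro a ha b hb hab
  rcases lt_trichotomy a b with hlt | rfl | hgt
  · exact (newPattern_ne_of_lt h hn hlt hb hab).elim
  · rfl
  · exact (newPattern_ne_of_lt h hn hgt ha hab.symm).elim

lemma sigma'_eq_of_newPattern_eq_patExt {i : ℕ} {t : List ℕ} (ht : t.length = n - 1)
    (h : newPattern n k j = patExt i t) : sigma' n k j = red t := by
  rw [sigma'_eq_red_take_newPattern, h, ← ht, red_take_patExt]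

lemma greedyStep_eq_none_of_newPattern_pred_eq_range' (h : Runs n k) (hn : 0 < n) (hk : 0 < k)
    (hid : newPattern n k (k - 1) = range' 1 n) : greedyStep n (greedy n k) = none := by
  obtain ⟨m, rfl⟩ : ∃ m, n = m + 1 := ⟨n - 1, by omega⟩
  have hk' : k - 1 < k := by omega
  obtain ⟨i, -, -, hi, hmin, -⟩ := exists_newPattern_eq_patExt h hn hk'
  have hprev : sigma' (m + 1) k (k - 1) = range' 1 m := by
    rw [sigma'_eq_red_take_newPattern, hid, Nat.add_sub_cancel, red_take_range']
  have hlast : sigma' (m + 1) k k = range' 1 m := by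
    have := sigma'_succ (n := m + 1) (k := k) (j := k - 1)
    rwa [Nat.sub_add_cancel hk, hid, red_tail_range'] at this
  have hi_eq : i = m + 1 := by
    rw [hid, hprev, ← patExt_succ_range'] at hi
    exact (eq_of_patExt_eq hi).symm
  rw [greedyStep_greedy_eq_none_iff h hn]
  intro l hl1 hl2
  rcases hl2.lt_or_eq with hlt | rfl
  · obtain ⟨j, hj, he⟩ := hmin l hl1 (hi_eq ▸ hlt)
    exact ⟨j, by omega, by rw [he, hprev, hlast]⟩
  · exact ⟨k - 1, hk', by rw [hid, hlast, patExt_succ_range']⟩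

end Patterns

def departures (n k : ℕ) : Finset ℕ :=
  (Finset.range k).filter fun j => sigma' n k j = sigma' n k k

def arrivals (n k : ℕ) : Finset ℕ :=
  (Finset.range k).filter fun j => sigma' n k (j + 1) = sigma' n k k

def occurrences (n k : ℕ) : Finset ℕ :=
  (Finset.range (k + 1)).filter fun j => sigma' n k j = sigma' n k k

section Counting

variable {n k j : ℕ}

lemma mem_departures : j ∈ departures n k ↔ j < k ∧ sigma' n k j = sigma' n k k := by
  rw [departures, Finset.mem_filter, Finset.mem_range]

lemma mem_arrivals : j ∈ arrivals n k ↔ j < k ∧ sigma' n k (j + 1) = sigma' n k k := by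
  rw [arrivals, Finset.mem_filter, Finset.mem_range]

lemma mem_occurrences : j ∈ occurrences n k ↔ j ≤ k ∧ sigma' n k j = sigma' n k k := by
  rw [occurrences, Finset.mem_filter, Finset.mem_range, Nat.lt_succ_iff]

lemma card_occurrences : (occurrences n k).card = (departures n k).card + 1 := by
  rw [occurrences, Finset.range_add_one, Finset.filter_insert, if_pos rfl,
    Finset.card_insert_of_notMem (by simp), departures]

lemma occurrences_subset : occurrences n k ⊆ insert 0 ((arrivals n k).image (· + 1)) := by
  intro j hj
  rw [mem_occurrences] at hj
  rcases j with _ | j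
  · exact Finset.mem_insert_self _ _
  · exact Finset.mem_insert_of_mem (Finset.mem_image.2 ⟨j, mem_arrivals.2 ⟨hj.1, hj.2⟩, rfl⟩)

lemma newPattern_eq_of_mem_departures (h : Runs n k) (hn : 0 < n) (hj : j ∈ departures n k) :
    newPattern n k j = patExt (choice n k j) (sigma' n k k) := by
  rw [newPattern_eq_patExt_choice h hn (mem_departures.1 hj).1, (mem_departures.1 hj).2]

lemma choice_injOn_departures (h : Runs n k) (hn : 0 < n) :
    Set.InjOn (choice n k) (departures n k) := fun a ha b hb hab =>
  newPattern_injOn h hn (mem_departures.1 ha).1 (mem_departures.1 hb).1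
    (by rw [newPattern_eq_of_mem_departures h hn ha, newPattern_eq_of_mem_departures h hn hb, hab])

lemma image_choice_departures_subset (h : Runs n k) (hn : 0 < n) :
    (departures n k).image (choice n k) ⊆ Finset.Icc 1 n := by
  rw [Finset.image_subset_iff]
  exact fun j hj => choice_mem_Icc h hn (mem_departures.1 hj).1

lemma head!_newPattern_mem_Icc (h : Runs n k) (hn : 0 < n) (hj : j < k) :
    (newPattern n k j).head! ∈ Finset.Icc 1 n := by
  have hlen := length_newPattern h hj
  have hmem : (newPattern n k j).head! ∈ red (newPattern n k j) := by
    rw [red_newPattern]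
    exact head!_mem_self (ne_nil_of_length_pos (by omega))
  simpa only [hlen] using mem_Icc_of_mem_red hmem

lemma head!_injOn_arrivals (h : Runs n k) (hn : 0 < n) :
    Set.InjOn (fun j => (newPattern n k j).head!) (arrivals n k) := fun a ha b hb hab => by
  rw [Finset.mem_coe, mem_arrivals] at ha hb
  refine newPattern_injOn h hn ha.1 hb.1 (eq_of_head!_eq_of_red_tail_eq (nodup_newPattern h)
    (nodup_newPattern h) red_newPattern red_newPattern hab ?_)
  rw [← sigma'_succ, ← sigma'_succ, ha.2, hb.2]

lemma card_arrivals_le (h : Runs n k) (hn : 0 < n) : (arrivals n k).card ≤ n := by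
  have hmaps : Set.MapsTo (fun j => (newPattern n k j).head!) (arrivals n k) (Finset.Icc 1 n) :=
    fun _ hj => head!_newPattern_mem_Icc h hn (mem_arrivals.1 hj).1
  simpa using Finset.card_le_card_of_injOn _ hmaps (head!_injOn_arrivals h hn)

lemma mem_image_choice_departures_iff (h : Runs n k) (hn : 0 < n) {i : ℕ} :
    i ∈ (departures n k).image (choice n k) ↔
      ∃ j < k, newPattern n k j = patExt i (sigma' n k k) := by
  rw [Finset.mem_image]
  constructor
  · rintro ⟨j, hj, rfl⟩
    exact ⟨j, (mem_departures.1 hj).1, newPattern_eq_of_mem_departures h hn hj⟩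
  · rintro ⟨j, hj, he⟩
    refine ⟨j, mem_departures.2 ⟨hj, ?_⟩, choice_of_newPattern_eq_patExt he⟩
    rw [sigma'_eq_of_newPattern_eq_patExt (length_sigma' h le_rfl) he, red_sigma']

lemma greedyStep_eq_none_iff_image_choice (h : Runs n k) (hn : 0 < n) :
    greedyStep n (greedy n k) = none ↔
      (departures n k).image (choice n k) = Finset.Icc 1 n := by
  rw [greedyStep_greedy_eq_none_iff h hn]
  refine ⟨fun H => (image_choice_departures_subset h hn).antisymm fun i hi => ?_,
    fun H i h1 h2 => ?_⟩
  · rw [Finset.mem_Icc] at hi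
    exact (mem_image_choice_departures_iff h hn).2 (H i hi.1 hi.2)
  · exact (mem_image_choice_departures_iff h hn).1 (H ▸ Finset.mem_Icc.2 ⟨h1, h2⟩)

lemma greedyStep_eq_none_iff_card_departures (h : Runs n k) (hn : 0 < n) :
    greedyStep n (greedy n k) = none ↔ (departures n k).card = n := by
  rw [greedyStep_eq_none_iff_image_choice h hn,
    ← Finset.card_image_of_injOn (choice_injOn_departures h hn)]
  refine ⟨fun H => by simp [H], fun H =>
    Finset.eq_of_subset_of_card_le (image_choice_departures_subset h hn) (by simp [H])⟩

lemma greedyStep_eq_none_iff_card_occurrences (h : Runs n k) (hn : 0 < n) :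
    greedyStep n (greedy n k) = none ↔ (occurrences n k).card = n + 1 := by
  rw [greedyStep_eq_none_iff_card_departures h hn, card_occurrences, Nat.add_right_cancel_iff]

lemma sigma'_eq_range'_of_greedyStep_eq_none (h : Runs n k) (hn : 0 < n)
    (hstop : greedyStep n (greedy n k) = none) : sigma' n k k = range' 1 (n - 1) := by
  have hocc := (greedyStep_eq_none_iff_card_occurrences h hn).1 hstop
  have h0 : 0 ∈ occurrences n k := by
    by_contra h0
    have hsub : occurrences n k ⊆ (arrivals n k).image (· + 1) := fun j hj =>
      (Finset.mem_insert.1 (occurrences_subset hj)).resolve_left (by rintro rfl; exact h0 hj)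
    have := (Finset.card_le_card hsub).trans Finset.card_image_le
    have := card_arrivals_le h hn
    omega
  rw [← sigma'_zero h]
  exact (mem_occurrences.1 h0).2.symm

lemma lt_of_choice_lt (h : Runs n k) (hn : 0 < n) {a b : ℕ} (ha : a ∈ departures n k)
    (hb : b ∈ departures n k) (hab : choice n k a < choice n k b) : a < b := by
  have ha' := (mem_departures.1 ha).1
  have hb' := (mem_departures.1 hb).1
  obtain ⟨j, hj, he⟩ := exists_newPattern_eq_of_lt_choice h hn hb'
    (Finset.mem_Icc.1 (choice_mem_Icc h hn ha')).1 hab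
  rw [(mem_departures.1 hb).2, ← newPattern_eq_of_mem_departures h hn ha] at he
  have := newPattern_injOn h hn (hj.trans hb') ha' he
  omega

lemma le_of_mem_departures_of_choice_eq (h : Runs n k) (hn : 0 < n) {a b : ℕ}
    (ha : a ∈ departures n k) (hb : b ∈ departures n k) (hc : choice n k b = n) : a ≤ b := by
  rcases (Finset.mem_Icc.1 (choice_mem_Icc h hn (mem_departures.1 ha).1)).2.lt_or_eq with hlt | heq
  · exact (lt_of_choice_lt h hn ha hb (by rwa [hc])).le
  · exact (choice_injOn_departures h hn ha hb (heq.trans hc.symm)).le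

lemma newPattern_pred_eq_range'_of_greedyStep_eq_none (h : Runs n k) (hn : 0 < n)
    (hstop : greedyStep n (greedy n k) = none) : newPattern n k (k - 1) = range' 1 n := by
  have hv := sigma'_eq_range'_of_greedyStep_eq_none h hn hstop
  obtain ⟨m, rfl⟩ : ∃ m, n = m + 1 := ⟨n - 1, by omega⟩
  have himage := (greedyStep_eq_none_iff_image_choice h hn).1 hstop
  obtain ⟨jn, hjn, hc⟩ := Finset.mem_image.1 (himage ▸ Finset.mem_Icc.2 ⟨hn, le_rfl⟩)
  have hjn_pat : newPattern (m + 1) k jn = range' 1 (m + 1) := by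
    rw [newPattern_eq_of_mem_departures h hn hjn, hc, hv, Nat.add_sub_cancel, patExt_succ_range']
  have hnext : sigma' (m + 1) k (jn + 1) = sigma' (m + 1) k k := by
    rw [sigma'_succ, hjn_pat, red_tail_range', hv, Nat.add_sub_cancel]
  have hjn_k : jn + 1 = k := by
    by_contra hne
    have := le_of_mem_departures_of_choice_eq h hn
      (mem_departures.2 ⟨by have := (mem_departures.1 hjn).1; omega, hnext⟩) hjn hc
    omega
  rwa [show k - 1 = jn by omega]

end Counting

end Greedy

/-- With `σ'_j = red(a_{j+1}⋯a_{j+n-1})` and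
`J_k = |{j ≤ k : σ'_j = σ'_k}|`, the greedy algorithm terminates at step `k`
iff `J_k = n+1`, iff `σ_k = 12⋯n`. -/
theorem stmt4 (n : ℕ) (hn : 2 ≤ n) (k : ℕ) (hk : 1 ≤ k)
    (hrun : ∀ j < k, greedyStep n (greedy n j) ≠ none) :
    (greedyStep n (greedy n k) = none ↔
      ((List.range (k + 1)).filter (fun j =>
          red (((greedy n k).drop j).take (n - 1)) =
          red (((greedy n k).drop k).take (n - 1)))).length = n + 1) ∧
    (greedyStep n (greedy n k) = none ↔
      sigma (greedy n k) n k = List.range' 1 n) := by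
  have hn' : 0 < n := by omega
  have hJ : ((List.range (k + 1)).filter (fun j =>
      red (((greedy n k).drop j).take (n - 1)) = red (((greedy n k).drop k).take (n - 1)))).length =
      (Greedy.occurrences n k).card := rfl
  have hσ : sigma (greedy n k) n k = Greedy.newPattern n k (k - 1) := rfl
  rw [hJ, hσ]
  exact ⟨Greedy.greedyStep_eq_none_iff_card_occurrences hrun hn',
    Greedy.newPattern_pred_eq_range'_of_greedyStep_eq_none hrun hn',
    Greedy.greedyStep_eq_none_of_newPattern_pred_eq_range' hrun hn' hk⟩
end

section
/- The word Π'_n output by the greedy algorithm covers every permutation of length n; that is, for every n-permutation π there is a factor of Π'_n of length n whose reduced form is π. -/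
namespace GreedyCover

/-! ### Reduced forms -/

def rank (w : List ℕ) (x : ℕ) : ℕ := w.countP (· ≤ x)

theorem red_eq_map_rank (w : List ℕ) : red w = w.map (rank w) := by
  simp [red, rank, List.countP_eq_length_filter]

@[simp] theorem length_red (w : List ℕ) : (red w).length = w.length := by
  simp [red_eq_map_rank]

theorem getElem_red (w : List ℕ) (i : ℕ) (h : i < (red w).length) :
    (red w)[i] = rank w (w[i]'(by simpa using h)) := by
  simp [red_eq_map_rank]

theorem rank_mono (w : List ℕ) : Monotone (rank w) :=
  fun _ _ hxy => List.countP_mono_left fun _ _ h => by simp only [decide_eq_true_eq] at *; omega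

theorem rank_lt_rank {w : List ℕ} {x y : ℕ} (hy : y ∈ w) (hxy : x < y) : rank w x < rank w y := by
  induction w with
  | nil => simp at hy
  | cons a w ih =>
    have hmono := rank_mono w hxy.le
    rcases List.mem_cons.mp hy with rfl | hy
    · simp only [rank, List.countP_cons, decide_eq_true_eq] at hmono ⊢
      split_ifs <;> omega
    · have := ih hy
      simp only [rank, List.countP_cons, decide_eq_true_eq] at hmono this ⊢
      split_ifs <;> omega

theorem le_iff_rank_le {w : List ℕ} {x y : ℕ} (hx : x ∈ w) :
    x ≤ y ↔ rank w x ≤ rank w y :=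
  ⟨fun h => rank_mono w h, fun h => by
    by_contra hxy
    exact absurd h (not_le.mpr (rank_lt_rank hx (not_le.mp hxy)))⟩

theorem red_congr {u v : List ℕ} (hl : u.length = v.length)
    (hc : ∀ i j (hi : i < u.length) (hj : j < u.length),
      u[i] ≤ u[j] ↔ v[i]'(hl ▸ hi) ≤ v[j]'(hl ▸ hj)) :
    red u = red v := by
  refine List.ext_getElem (by simp [hl]) fun j hju hjv => ?_
  have hj : j < u.length := by simpa using hju
  have hmap : u.map (fun x => decide (x ≤ u[j])) = v.map (fun x => decide (x ≤ v[j]'(hl ▸ hj))) :=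
    List.ext_getElem (by simp [hl]) fun i hi _ => by
      simpa using hc i j (by simpa using hi) hj
  have hcount (l : List ℕ) (f : ℕ → Bool) : l.countP f = (l.map f).countP id := by
    simp [List.countP_map]
  simp only [getElem_red, rank]
  rw [hcount u, hcount v, hmap]

theorem le_iff_getElem_red_le (u : List ℕ) (i j : ℕ) (hi : i < u.length) (hj : j < u.length) :
    u[i] ≤ u[j] ↔ (red u)[i]'(by simpa using hi) ≤ (red u)[j]'(by simpa using hj) := by
  rw [getElem_red, getElem_red]
  exact le_iff_rank_le (u.getElem_mem hi)

theorem red_red (u : List ℕ) : red (red u) = red u :=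
  red_congr (by simp) fun i j hi hj =>
    (le_iff_getElem_red_le u i j (by simpa using hi) (by simpa using hj)).symm

theorem red_take_red (u : List ℕ) (j : ℕ) : red ((red u).take j) = red (u.take j) :=
  red_congr (by simp) fun a b ha hb => by
    simp only [List.getElem_take]
    exact (le_iff_getElem_red_le u a b (by simp at ha; omega) (by simp at hb; omega)).symm

theorem red_drop_red (u : List ℕ) (j : ℕ) : red ((red u).drop j) = red (u.drop j) :=
  red_congr (by simp) fun a b ha hb => by
    simp only [List.getElem_drop]
    exact (le_iff_getElem_red_le u _ _ (by simp at ha; omega) (by simp at hb; omega)).symm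

theorem red_map_of_le_iff (u : List ℕ) (f : ℕ → ℕ)
    (hf : ∀ x ∈ u, ∀ y ∈ u, f x ≤ f y ↔ x ≤ y) : red (u.map f) = red u :=
  red_congr (by simp) fun i j hi hj => by
    simp only [List.getElem_map]
    exact hf _ (u.getElem_mem (by simpa using hi)) _ (u.getElem_mem (by simpa using hj))

theorem one_le_of_mem_red {u : List ℕ} {x : ℕ} (h : x ∈ red u) : 1 ≤ x ∧ x ≤ u.length := by
  rw [red_eq_map_rank] at h
  obtain ⟨y, hy, rfl⟩ := List.mem_map.mp h
  exact ⟨List.countP_pos_iff.mpr ⟨y, hy, by simp⟩, List.countP_le_length⟩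

theorem nodup_red {u : List ℕ} (h : u.Nodup) : (red u).Nodup := by
  rw [red_eq_map_rank]
  refine h.map_on fun x hx y hy hxy => le_antisymm ?_ ?_
  · exact (le_iff_rank_le hx).mpr hxy.le
  · exact (le_iff_rank_le hy).mpr hxy.ge

theorem red_perm_range' {u : List ℕ} (h : u.Nodup) : (red u).Perm (List.range' 1 u.length) :=
  List.Subperm.perm_of_length_le
    ((nodup_red h).subperm fun x hx =>
      List.mem_range'_1.mpr (by have := one_le_of_mem_red hx; omega))
    (by simp)

theorem rank_range' (L x : ℕ) : rank (List.range' 1 L) x = min x L := by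
  induction L with
  | zero => simp [rank]
  | succ L ih =>
    rw [List.range'_concat]
    simp only [rank] at *
    rw [List.countP_append, ih]
    by_cases h : 1 + L ≤ x <;> simp [h] <;> omega

theorem red_eq_self_of_perm {p : List ℕ} {L : ℕ} (h : p.Perm (List.range' 1 L)) : red p = p := by
  rw [red_eq_map_rank]
  refine (List.map_congr_left fun x hx => ?_).trans (List.map_id p)
  have hx' := List.mem_range'_1.mp (h.mem_iff.mp hx)
  have : rank p x = rank (List.range' 1 L) x := h.countP_eq _
  rw [this, rank_range', id]
  omega

theorem red_range' (a m : ℕ) : red (List.range' a m) = List.range' 1 m := by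
  rw [← red_eq_self_of_perm (List.Perm.refl (List.range' 1 m))]
  exact red_congr (by simp) fun i j _ _ => by simp only [List.getElem_range']; omega

theorem red_append_singleton_of_forall_lt {u : List ℕ} {N : ℕ} (h : ∀ x ∈ u, x < N) :
    red (u ++ [N]) = red u ++ [u.length + 1] := by
  have hrank : ∀ x ∈ u, rank (u ++ [N]) x = rank u x := fun x hx => by
    simp [rank, List.countP_append, (h x hx)]
  simp only [red_eq_map_rank, List.map_append, List.map_cons, List.map_nil,
    List.map_congr_left hrank]
  congr 2
  simp only [rank, List.countP_append, List.countP_singleton, le_refl, decide_true, if_true,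
    add_left_inj, List.countP_eq_length, decide_eq_true_eq]
  exact fun x hx => (h x hx).le

/-! ### Appending a letter -/

theorem cshift_le_cshift_iff {b x y : ℕ} : cshift b x ≤ cshift b y ↔ x ≤ y := by
  unfold cshift; split_ifs <;> omega

theorem cshift_le_iff {b x : ℕ} : cshift b x ≤ b ↔ x < b := by
  unfold cshift; split_ifs <;> omega

theorem le_cshift_iff {b x : ℕ} : b ≤ cshift b x ↔ b ≤ x := by
  unfold cshift; split_ifs <;> omega

theorem cshift_ne (b x : ℕ) : cshift b x ≠ b := by
  unfold cshift; split_ifs <;> omega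

theorem cshift_injective (b : ℕ) : Function.Injective (cshift b) := fun _ _ h =>
  le_antisymm (cshift_le_cshift_iff.mp h.le) (cshift_le_cshift_iff.mp h.ge)

theorem red_map_cshift (u : List ℕ) (b : ℕ) : red (u.map (cshift b)) = red u :=
  red_map_of_le_iff u _ fun _ _ _ _ => cshift_le_cshift_iff

/-- The word `c_b(w) b` of the paper. -/
def appendLetter (b : ℕ) (w : List ℕ) : List ℕ := w.map (cshift b) ++ [b]

@[simp] theorem length_appendLetter (b : ℕ) (w : List ℕ) :
    (appendLetter b w).length = w.length + 1 := by
  simp [appendLetter]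

theorem ext_eq_appendLetter (i : ℕ) (s : List ℕ) : ext i s = appendLetter (extb s i) s := rfl

theorem getElem_appendLetter (b : ℕ) (w : List ℕ) (p : ℕ) (hp : p < (appendLetter b w).length) :
    (appendLetter b w)[p] = if h : p < w.length then cshift b w[p] else b := by
  simp only [appendLetter, List.getElem_append, List.length_map, List.getElem_map]
  split_ifs <;> simp

theorem nodup_appendLetter {w : List ℕ} (h : w.Nodup) (b : ℕ) : (appendLetter b w).Nodup := by
  rw [appendLetter, (List.perm_append_singleton _ _).nodup_iff, List.nodup_cons]
  exact ⟨fun hb => by obtain ⟨y, -, hy⟩ := List.mem_map.mp hb; exact cshift_ne b y hy,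
    h.map (cshift_injective b)⟩

theorem drop_appendLetter {w : List ℕ} {t : ℕ} (ht : t ≤ w.length) (b : ℕ) :
    (appendLetter b w).drop t = appendLetter b (w.drop t) := by
  simp [appendLetter, List.drop_append, List.map_drop, Nat.sub_eq_zero_of_le ht]

theorem take_appendLetter {w : List ℕ} {t : ℕ} (ht : t ≤ w.length) (b : ℕ) :
    (appendLetter b w).take t = (w.take t).map (cshift b) := by
  rw [appendLetter, List.take_append_of_le_length (by simpa using ht), List.map_take]

theorem red_appendLetter_congr {u v : List ℕ} {b c : ℕ} (hl : u.length = v.length)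
    (huv : ∀ i j (hi : i < u.length) (hj : j < u.length),
      u[i] ≤ u[j] ↔ v[i]'(hl ▸ hi) ≤ v[j]'(hl ▸ hj))
    (hbc : ∀ i (hi : i < u.length), b ≤ u[i] ↔ c ≤ v[i]'(hl ▸ hi)) :
    red (appendLetter b u) = red (appendLetter c v) :=
  red_congr (by simp [hl]) fun i j hi hj => by
    simp only [getElem_appendLetter, ← hl]
    split_ifs with h₁ h₂ h₂
    · simpa only [cshift_le_cshift_iff] using huv i j h₁ h₂
    · simpa only [cshift_le_iff, not_le] using not_congr (hbc i h₁)
    · simpa only [le_cshift_iff] using hbc j h₂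
    · simp

/-! ### Extensions -/

theorem getElem_le_iff_lt_rank {t : List ℕ} (ht : t.Pairwise (· ≤ ·)) {i : ℕ} (hi : i < t.length)
    (x : ℕ) : t[i] ≤ x ↔ i < rank t x := by
  have hsplit : t = t.take i ++ t[i] :: t.drop (i + 1) := by
    rw [← List.drop_eq_getElem_cons, List.take_append_drop]
  have hpw := hsplit ▸ ht
  rw [List.pairwise_append, List.pairwise_cons] at hpw
  have hleft : ∀ a ∈ t.take i, a ≤ t[i] := fun a ha => hpw.2.2 a ha _ List.mem_cons_self
  have hright : ∀ a ∈ t.drop (i + 1), t[i] ≤ a := hpw.2.1.1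
  have hlen : (t.take i).length = i := by simp; omega
  have hrank : rank t x = (t.take i).countP (· ≤ x) + (t.drop (i + 1)).countP (· ≤ x) +
      if t[i] ≤ x then 1 else 0 := by
    conv_lhs => rw [hsplit]
    simp only [rank, List.countP_append, List.countP_cons, decide_eq_true_eq]
    omega
  rw [hrank]
  constructor
  · intro h
    have : (t.take i).countP (· ≤ x) = i :=
      (List.countP_eq_length.mpr fun a ha => by simpa using (hleft a ha).trans h).trans hlen
    simp only [this, h, if_true]
    omega
  · intro h
    by_contra hx
    have : (t.drop (i + 1)).countP (· ≤ x) = 0 :=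
      List.countP_eq_zero.mpr fun a ha => by simpa using lt_of_lt_of_le (not_le.mp hx) (hright a ha)
    have := (t.take i).countP_le_length (p := (· ≤ x))
    simp only [hx, if_false] at h
    omega

theorem extb_le_iff {s : List ℕ} {i e : ℕ} (h1 : 1 ≤ i) (h2 : i ≤ s.length + 1) (he : e ∈ s) :
    extb s i ≤ e ↔ i ≤ rank s e := by
  unfold extb
  split_ifs with hi
  · have hsort := List.pairwise_insertionSort (· ≤ ·) s
    have hlen : i - 1 < (s.insertionSort (· ≤ ·)).length := by simp; omega
    have hrank : rank (s.insertionSort (· ≤ ·)) e = rank s e :=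
      (List.perm_insertionSort _ s).countP_eq _
    rw [nthSmallest, List.getD_eq_getElem _ _ hlen, getElem_le_iff_lt_rank hsort hlen, hrank]
    omega
  · have : e ≤ s.foldr max 0 := List.le_max_of_le he le_rfl
    have : rank s e ≤ s.length := List.countP_le_length
    omega

theorem extb_of_perm {q : List ℕ} {L i : ℕ} (h : q.Perm (List.range' 1 L))
    (h1 : 1 ≤ i) (h2 : i ≤ L + 1) : extb q i = i := by
  have hlen : q.length = L := by simpa using h.length_eq
  have hmem : ∀ x ∈ q, 1 ≤ x ∧ x ≤ L := fun x hx => by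
    have := List.mem_range'_1.mp (h.mem_iff.mp hx); omega
  unfold extb
  split_ifs with hi
  · have hsort : q.insertionSort (· ≤ ·) = List.range' 1 L :=
      List.Perm.eq_of_pairwise' (List.pairwise_insertionSort _ q) List.pairwise_le_range'
        ((List.perm_insertionSort _ q).trans h)
    rw [nthSmallest, hsort, List.getD_eq_getElem _ _ (by simp; omega), List.getElem_range']
    omega
  · suffices q.foldr max 0 = L by omega
    refine le_antisymm (List.max_le_of_forall_le q L fun x hx => (hmem x hx).2) ?_
    rcases Nat.eq_zero_or_pos L with hL | hL
    · omega
    · exact List.le_max_of_le (h.mem_iff.mpr (List.mem_range'_1.mpr ⟨hL, by omega⟩)) le_rfl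

theorem ext_of_perm {q : List ℕ} {L i : ℕ} (h : q.Perm (List.range' 1 L))
    (h1 : 1 ≤ i) (h2 : i ≤ L + 1) : ext i q = appendLetter i q := by
  rw [ext_eq_appendLetter, extb_of_perm h h1 h2]

theorem perm_appendLetter {q : List ℕ} {L i : ℕ} (h : q.Perm (List.range' 1 L))
    (h1 : 1 ≤ i) (h2 : i ≤ L + 1) : (appendLetter i q).Perm (List.range' 1 (L + 1)) := by
  have hnodup := nodup_appendLetter (h.nodup_iff.mpr List.nodup_range') i
  refine List.Subperm.perm_of_length_le (hnodup.subperm fun x hx => ?_) (by simp [h.length_eq])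
  rw [appendLetter, List.mem_append, List.mem_singleton, List.mem_map] at hx
  rw [List.mem_range'_1]
  rcases hx with ⟨y, hy, rfl⟩ | rfl
  · have := List.mem_range'_1.mp (h.mem_iff.mp hy)
    unfold cshift; split_ifs <;> omega
  · omega

/-- Reducing commutes with extending, because `extb s i` sits between the letters of rank
`i - 1` and `i` of `s`. -/
theorem red_ext {s : List ℕ} {i : ℕ} (hs : s.Nodup) (h1 : 1 ≤ i) (h2 : i ≤ s.length + 1) :
    red (ext i s) = ext i (red s) := by
  have hq := red_perm_range' hs
  rw [ext_of_perm hq h1 h2, ← red_eq_self_of_perm (perm_appendLetter hq h1 h2),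
    ext_eq_appendLetter]
  refine red_appendLetter_congr (by simp) (le_iff_getElem_red_le s) fun j hj => ?_
  rw [extb_le_iff h1 h2 (s.getElem_mem hj), getElem_red]

theorem map_cshift_red_eq {a : ℕ} {u : List ℕ} {n : ℕ} (h : (a :: u).Perm (List.range' 1 n)) :
    (red u).map (cshift a) = u := by
  have hau : a ∉ u := (List.nodup_cons.mp (h.nodup_iff.mpr List.nodup_range')).1
  rw [red_eq_map_rank, List.map_map]
  refine (List.map_congr_left fun x hx => ?_).trans (List.map_id u)
  have hx' := List.mem_range'_1.mp (h.mem_iff.mp (List.mem_cons_of_mem a hx))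
  have hcount : rank (a :: u) x = rank u x + if a ≤ x then 1 else 0 := by
    simp [rank, List.countP_cons]
  have hrank : rank (a :: u) x = min x n := (h.countP_eq _).trans (rank_range' n x)
  have hax : a ≠ x := fun hc => hau (hc ▸ hx)
  simp only [Function.comp, id, cshift]
  split_ifs at hcount ⊢ <;> omega

/-- The word `a c_a(q)` of the paper. -/
def consLetter (a : ℕ) (q : List ℕ) : List ℕ := a :: q.map (cshift a)

section Decompose

variable {n : ℕ} {p q : List ℕ} {a : ℕ}

theorem getD_mem_Icc (h : p.Perm (List.range' 1 n)) {i : ℕ} (hi : i < n) :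
    p.getD i 0 ∈ Finset.Icc 1 n := by
  have hi' : i < p.length := by simpa [h.length_eq] using hi
  have := List.mem_range'_1.mp (h.subset (p.getElem_mem hi'))
  rw [List.getD_eq_getElem _ _ hi', Finset.mem_Icc]
  omega

theorem perm_red_take (h : p.Perm (List.range' 1 n)) :
    (red (p.take (n - 1))).Perm (List.range' 1 (n - 1)) := by
  have hnodup := (h.nodup_iff.mpr List.nodup_range').sublist (p.take_sublist (n - 1))
  simpa [h.length_eq] using red_perm_range' hnodup

theorem perm_red_drop (h : p.Perm (List.range' 1 n)) :
    (red (p.drop 1)).Perm (List.range' 1 (n - 1)) := by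
  have hnodup := (h.nodup_iff.mpr List.nodup_range').sublist (p.drop_sublist 1)
  simpa [h.length_eq] using red_perm_range' hnodup

theorem ext_getD_red_take (hn : 1 ≤ n) (h : p.Perm (List.range' 1 n)) :
    ext (p.getD (n - 1) 0) (red (p.take (n - 1))) = p := by
  have hlen : p.length = n := by simpa using h.length_eq
  have hsplit : p = p.take (n - 1) ++ [p.getD (n - 1) 0] := by
    conv_lhs => rw [← List.take_append_drop (n - 1) p]
    rw [List.drop_eq_getElem_cons (by omega), List.drop_eq_nil_of_le (by omega),
      List.getD_eq_getElem _ _ (by omega)]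
  have ha := Finset.mem_Icc.mp (getD_mem_Icc h (show n - 1 < n by omega))
  rw [ext_of_perm (perm_red_take h) ha.1 (by omega), appendLetter,
    map_cshift_red_eq ((List.perm_append_singleton _ _).symm.trans (hsplit ▸ h)), ← hsplit]

theorem consLetter_getD_red_drop (hn : 1 ≤ n) (h : p.Perm (List.range' 1 n)) :
    consLetter (p.getD 0 0) (red (p.drop 1)) = p := by
  cases p with
  | nil => have := h.length_eq; simp at this; omega
  | cons a u => simp [consLetter, map_cshift_red_eq h]

theorem red_take_ext (hq : q.Perm (List.range' 1 (n - 1))) (ha : a ∈ Finset.Icc 1 n) :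
    red ((ext a q).take (n - 1)) = q := by
  rw [Finset.mem_Icc] at ha
  rw [ext_of_perm hq ha.1 (by omega), take_appendLetter (by simp [hq.length_eq]),
    List.take_of_length_le (by simp [hq.length_eq]), red_map_cshift, red_eq_self_of_perm hq]

theorem getD_ext (hq : q.Perm (List.range' 1 (n - 1))) (ha : a ∈ Finset.Icc 1 n) :
    (ext a q).getD (n - 1) 0 = a := by
  rw [Finset.mem_Icc] at ha
  rw [ext_of_perm hq ha.1 (by omega), appendLetter,
    List.getD_append_right _ _ _ _ (by simp [hq.length_eq])]
  simp [hq.length_eq]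

theorem ext_inj {q' : List ℕ} {a' : ℕ} (hq : q.Perm (List.range' 1 (n - 1)))
    (hq' : q'.Perm (List.range' 1 (n - 1))) (ha : a ∈ Finset.Icc 1 n) (ha' : a' ∈ Finset.Icc 1 n) :
    ext a q = ext a' q' ↔ a = a' ∧ q = q' := by
  refine ⟨fun h => ⟨?_, ?_⟩, fun ⟨ha, hq⟩ => ha ▸ hq ▸ rfl⟩
  · rw [← getD_ext hq ha, h, getD_ext hq' ha']
  · rw [← red_take_ext hq ha, h, red_take_ext hq' ha']

theorem perm_ext {n : ℕ} {q : List ℕ} {a : ℕ} (hq : q.Perm (List.range' 1 (n - 1)))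
    (ha : a ∈ Finset.Icc 1 n) : (ext a q).Perm (List.range' 1 n) := by
  rw [Finset.mem_Icc] at ha
  rw [ext_of_perm hq ha.1 (by omega)]
  simpa [show n - 1 + 1 = n by omega] using perm_appendLetter hq ha.1 (by omega)

theorem ext_eq_append_of_perm {n : ℕ} {q : List ℕ} (hn : 1 ≤ n)
    (hq : q.Perm (List.range' 1 (n - 1))) : ext n q = q ++ [n] := by
  rw [ext_of_perm hq hn (by omega), appendLetter]
  congr 1
  refine (List.map_congr_left fun x hx => ?_).trans (List.map_id q)
  have := List.mem_range'_1.mp (hq.subset hx)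
  simp only [cshift, id]
  split_ifs <;> omega

end Decompose

/-! ### The greedy step -/

def lastLetters (n : ℕ) (w : List ℕ) : List ℕ := w.drop (w.length - (n - 1))

section Step

variable {n : ℕ} {w : List ℕ}

theorem coversB_iff (hn : 1 ≤ n) (p : List ℕ) : coversB w n p = true ↔ covers w n p := by
  simp only [coversB, covers, List.any_eq_true, List.mem_range, Bool.and_eq_true,
    decide_eq_true_eq]
  exact ⟨fun ⟨k, _, h⟩ => ⟨k, h⟩, fun ⟨k, hk, h⟩ => ⟨k, by omega, hk, h⟩⟩

theorem greedyStep_eq (n : ℕ) (w : List ℕ) :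
    greedyStep n w = ((List.range' 1 ((lastLetters n w).length + 1)).find?
      fun i => !coversB w n (red (ext i (lastLetters n w)))).map
        fun i => appendLetter (extb (lastLetters n w) i) w := by
  unfold greedyStep lastLetters appendLetter
  dsimp only
  split <;> next heq => rw [heq]; rfl

theorem exists_of_greedyStep_eq_some (hn : 1 ≤ n) {w' : List ℕ} (h : greedyStep n w = some w') :
    ∃ i, 1 ≤ i ∧ i ≤ (lastLetters n w).length + 1 ∧
      ¬ covers w n (red (ext i (lastLetters n w))) ∧
      (∀ j, 1 ≤ j → j < i → covers w n (red (ext j (lastLetters n w)))) ∧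
      w' = appendLetter (extb (lastLetters n w) i) w := by
  rw [greedyStep_eq, Option.map_eq_some_iff] at h
  obtain ⟨i, hfind, rfl⟩ := h
  simp only [List.find?_range'_eq_some, Bool.not_eq_eq_eq_not, Bool.not_true, Bool.not_not,
    List.mem_range'_1, ← Bool.not_eq_true, coversB_iff hn] at hfind
  exact ⟨i, hfind.2.1.1, by omega, hfind.1, hfind.2.2, rfl⟩

theorem covers_of_greedyStep_eq_none (hn : 1 ≤ n) (h : greedyStep n w = none) {i : ℕ} (h1 : 1 ≤ i)
    (h2 : i ≤ (lastLetters n w).length + 1) : covers w n (red (ext i (lastLetters n w))) := by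
  rw [greedyStep_eq, Option.map_eq_none_iff, List.find?_range'_eq_none] at h
  simpa [coversB_iff hn] using h i h1 (by omega)

theorem window_appendLetter_of_le {t : ℕ} (ht : t + n ≤ w.length) (b : ℕ) :
    ((appendLetter b w).drop t).take n = ((w.drop t).take n).map (cshift b) := by
  rw [drop_appendLetter (by omega), take_appendLetter (by simp; omega), List.map_take]

theorem window_appendLetter_last (hn : 1 ≤ n) (hw : n - 1 ≤ w.length) (b : ℕ) :
    ((appendLetter b w).drop (w.length - (n - 1))).take n = appendLetter b (lastLetters n w) := by
  rw [drop_appendLetter (by omega), List.take_of_length_le (by simp; omega), lastLetters]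

theorem covers_appendLetter_iff (hn : 1 ≤ n) (hw : n - 1 ≤ w.length) (b : ℕ) (p : List ℕ) :
    covers (appendLetter b w) n p ↔
      covers w n p ∨ p = red (appendLetter b (lastLetters n w)) := by
  constructor
  · rintro ⟨t, ht, rfl⟩
    by_cases hlt : t + n ≤ w.length
    · exact Or.inl ⟨t, hlt, by rw [window_appendLetter_of_le hlt, red_map_cshift]⟩
    · obtain rfl : t = w.length - (n - 1) := by simp at ht; omega
      exact Or.inr (by rw [window_appendLetter_last hn hw])
  · rintro (⟨t, ht, rfl⟩ | rfl)
    · exact ⟨t, by simp; omega, by rw [window_appendLetter_of_le ht, red_map_cshift]⟩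
    · exact ⟨w.length - (n - 1), by simp; omega, by rw [window_appendLetter_last hn hw]⟩

theorem red_window_injective_appendLetter (hn : 1 ≤ n) (hw : n - 1 ≤ w.length) {i : ℕ}
    (hinj : ∀ t t', t + n ≤ w.length → t' + n ≤ w.length →
      red ((w.drop t).take n) = red ((w.drop t').take n) → t = t')
    (hnew : ¬ covers w n (red (ext i (lastLetters n w)))) :
    let w' := appendLetter (extb (lastLetters n w) i) w
    ∀ t t', t + n ≤ w'.length → t' + n ≤ w'.length →
      red ((w'.drop t).take n) = red ((w'.drop t').take n) → t = t' := by
  intro w'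
  have hold : ∀ u, u + n ≤ w.length → red ((w'.drop u).take n) = red ((w.drop u).take n) :=
    fun u hu => by rw [window_appendLetter_of_le hu, red_map_cshift]
  have hlast : ∀ u, u + n = w.length + 1 →
      red ((w'.drop u).take n) = red (ext i (lastLetters n w)) := fun u hu => by
    obtain rfl : u = w.length - (n - 1) := by omega
    rw [window_appendLetter_last hn hw, ext_eq_appendLetter]
  have hfresh : ∀ u u', u + n ≤ w.length → u' + n = w.length + 1 →
      red ((w'.drop u).take n) ≠ red ((w'.drop u').take n) := fun u u' hu hu' heq =>
    hnew ⟨u, hu, by rw [← hold u hu, heq, hlast u' hu']⟩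
  intro t t' ht ht' heq
  simp only [w', length_appendLetter] at ht ht'
  by_cases hlt : t + n ≤ w.length <;> by_cases hlt' : t' + n ≤ w.length
  · rw [hold t hlt, hold t' hlt'] at heq
    exact hinj t t' hlt hlt' heq
  · exact absurd heq (hfresh t t' hlt (by omega))
  · exact absurd heq.symm (hfresh t' t hlt' (by omega))
  · omega

end Step

structure GreedyInvariant (n : ℕ) (w : List ℕ) : Prop where
  le_length : n - 1 ≤ w.length
  nodup : w.Nodup
  red_window_injective : ∀ t t', t + n ≤ w.length → t' + n ≤ w.length →
    red ((w.drop t).take n) = red ((w.drop t').take n) → t = t'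
  covers_ext_of_le : ∀ q : List ℕ, q.Perm (List.range' 1 (n - 1)) → ∀ i j, 1 ≤ j → j ≤ i →
    i ≤ n → covers w n (ext i q) → covers w n (ext j q)
  red_take : red (w.take (n - 1)) = List.range' 1 (n - 1)

namespace GreedyInvariant

variable {n : ℕ} {w : List ℕ}

theorem initial (n : ℕ) : GreedyInvariant n (List.range' 1 (n - 1)) where
  le_length := by simp
  nodup := List.nodup_range'
  red_window_injective t t' ht ht' _ := by simp at ht ht'; omega
  covers_ext_of_le _ _ _ _ _ _ _ := fun ⟨t, ht, _⟩ => by simp at ht; omega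
  red_take := by rw [List.take_of_length_le (by simp), red_range']

theorem length_lastLetters (hI : GreedyInvariant n w) : (lastLetters n w).length = n - 1 := by
  simp [lastLetters]; have := hI.le_length; omega

theorem nodup_lastLetters (hI : GreedyInvariant n w) : (lastLetters n w).Nodup :=
  hI.nodup.sublist (List.drop_sublist _ _)

theorem perm_red_lastLetters (hI : GreedyInvariant n w) :
    (red (lastLetters n w)).Perm (List.range' 1 (n - 1)) :=
  hI.length_lastLetters ▸ red_perm_range' hI.nodup_lastLetters

theorem extend (hn : 1 ≤ n) (hI : GreedyInvariant n w) {i : ℕ} (h1 : 1 ≤ i) (h2 : i ≤ n)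
    (hnew : ¬ covers w n (red (ext i (lastLetters n w))))
    (hmin : ∀ j, 1 ≤ j → j < i → covers w n (red (ext j (lastLetters n w)))) :
    GreedyInvariant n (appendLetter (extb (lastLetters n w) i) w) := by
  have hred_ext : ∀ j, 1 ≤ j → j ≤ n → red (ext j (lastLetters n w)) =
      ext j (red (lastLetters n w)) := fun j hj1 hj2 =>
    red_ext hI.nodup_lastLetters hj1 (by rw [hI.length_lastLetters]; omega)
  have hcovers := covers_appendLetter_iff hn hI.le_length (extb (lastLetters n w) i)
  rw [← ext_eq_appendLetter, hred_ext i h1 h2] at hcovers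
  refine ⟨by simp; have := hI.le_length; omega, nodup_appendLetter hI.nodup _,
    red_window_injective_appendLetter hn hI.le_length hI.red_window_injective hnew, ?_, ?_⟩
  · intro q hq j j' hj' hjj' hj hcov
    rcases (hcovers _).mp hcov with hold | hext
    · exact (hcovers _).mpr (Or.inl (hI.covers_ext_of_le q hq j j' hj' hjj' hj hold))
    · obtain ⟨rfl, rfl⟩ := (ext_inj hq hI.perm_red_lastLetters
        (Finset.mem_Icc.mpr ⟨by omega, hj⟩) (Finset.mem_Icc.mpr ⟨h1, h2⟩)).mp hext
      rcases hjj'.lt_or_eq with hlt | rfl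
      · rw [← hred_ext j' hj' (by omega)]
        exact (hcovers _).mpr (Or.inl (hmin j' hj' hlt))
      · exact (hcovers _).mpr (Or.inr rfl)
  · rw [take_appendLetter hI.le_length, red_map_cshift, hI.red_take]

end GreedyInvariant

theorem greedy_succ_of_greedyStep_eq_some {n j : ℕ} {w' : List ℕ}
    (h : greedyStep n (greedy n j) = some w') : greedy n (j + 1) = w' := by
  rw [greedy, h]

theorem greedyInvariant_greedy {n k : ℕ} (hn : 1 ≤ n)
    (hsteps : ∀ j < k, greedyStep n (greedy n j) ≠ none) :
    ∀ j ≤ k, GreedyInvariant n (greedy n j) ∧ (greedy n j).length = n - 1 + j := by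
  intro j
  induction j with
  | zero => exact fun _ => ⟨GreedyInvariant.initial n, by simp [greedy]⟩
  | succ j ih =>
    intro hj
    obtain ⟨hI, hL⟩ := ih (by omega)
    obtain ⟨w', hw'⟩ := Option.ne_none_iff_exists'.mp (hsteps j (by omega))
    obtain ⟨i, h1, h2, hnew, hmin, rfl⟩ := exists_of_greedyStep_eq_some hn hw'
    rw [greedy_succ_of_greedyStep_eq_some hw']
    exact ⟨hI.extend hn h1 (by rw [hI.length_lastLetters] at h2; omega) hnew hmin,
      by simp [hL]; omega⟩

/-! ### Counting patterns of factors -/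

open scoped Finset

theorem card_filter_range_add_ite {α : Type*} [DecidableEq α] (f : ℕ → α) (k : ℕ) (q : α) :
    #{t ∈ Finset.range k | f t = q} + (if f k = q then 1 else 0) =
      #{t ∈ Finset.range k | f (t + 1) = q} + (if f 0 = q then 1 else 0) := by
  simp only [Finset.card_filter]
  rw [← Finset.sum_range_succ (fun t => if f t = q then 1 else 0), Finset.sum_range_succ']

/-- Counting objects `σ t` with a given projection `q` by the letter that completes `q` to them. -/
theorem card_filter_proj_eq {α β γ : Type*} [DecidableEq β] {σ : ℕ → α} {k : ℕ}
    (hσ : Set.InjOn σ (Set.Iio k)) {S : Finset γ} {proj : α → β} {letter : α → γ}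
    {E : γ → β → α} (hdecomp : ∀ t < k, letter (σ t) ∈ S ∧ E (letter (σ t)) (proj (σ t)) = σ t)
    {q : β} (hE : ∀ a ∈ S, proj (E a q) = q ∧ letter (E a q) = a)
    {P : γ → Prop} [DecidablePred P] (hP : ∀ a ∈ S, P a ↔ ∃ t < k, σ t = E a q) :
    #{t ∈ Finset.range k | proj (σ t) = q} = #{a ∈ S | P a} := by
  refine Finset.card_bij (fun t _ => letter (σ t)) ?_ ?_ ?_
  · intro t ht
    obtain ⟨htk, hq⟩ := Finset.mem_filter.mp ht
    have hd := hdecomp t (Finset.mem_range.mp htk)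
    exact Finset.mem_filter.mpr
      ⟨hd.1, (hP _ hd.1).mpr ⟨t, Finset.mem_range.mp htk, by rw [← hq, hd.2]⟩⟩
  · intro t ht t' ht' heq
    obtain ⟨htk, hq⟩ := Finset.mem_filter.mp ht
    obtain ⟨htk', hq'⟩ := Finset.mem_filter.mp ht'
    refine hσ (Finset.mem_range.mp htk) (Finset.mem_range.mp htk') ?_
    rw [← (hdecomp t (Finset.mem_range.mp htk)).2, ← (hdecomp t' (Finset.mem_range.mp htk')).2,
      heq, hq, hq']
  · intro a ha
    obtain ⟨haS, hPa⟩ := Finset.mem_filter.mp ha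
    obtain ⟨t, htk, ht⟩ := (hP a haS).mp hPa
    exact ⟨t, Finset.mem_filter.mpr ⟨Finset.mem_range.mpr htk, by rw [ht, (hE a haS).1]⟩,
      by rw [ht, (hE a haS).2]⟩

theorem card_filter_Icc_lt {n a : ℕ} {P : ℕ → Prop} [DecidablePred P] (ha : a ∈ Finset.Icc 1 n)
    (hPa : ¬ P a) : #{x ∈ Finset.Icc 1 n | P x} < n := by
  have := Finset.card_lt_card (Finset.filter_ssubset.mpr ⟨a, ha, hPa⟩)
  simpa using this

def prefixCount (w : List ℕ) (n k : ℕ) (q : List ℕ) : ℕ :=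
  #{t ∈ Finset.range k | red ((w.drop t).take (n - 1)) = q}

def suffixCount (w : List ℕ) (n k : ℕ) (q : List ℕ) : ℕ :=
  #{t ∈ Finset.range k | red ((w.drop (t + 1)).take (n - 1)) = q}

section Counting

variable {n k : ℕ} {w : List ℕ}

theorem covers_iff_exists_lt (hn : 1 ≤ n) (hL : w.length = n - 1 + k) (p : List ℕ) :
    covers w n p ↔ ∃ t < k, red ((w.drop t).take n) = p :=
  ⟨fun ⟨t, ht, h⟩ => ⟨t, by omega, h⟩, fun ⟨t, ht, h⟩ => ⟨t, by omega, h⟩⟩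

theorem perm_red_window (hn : 1 ≤ n) (hI : GreedyInvariant n w) (hL : w.length = n - 1 + k)
    {t : ℕ} (ht : t < k) : (red ((w.drop t).take n)).Perm (List.range' 1 n) := by
  have hnodup : ((w.drop t).take n).Nodup :=
    hI.nodup.sublist ((List.take_sublist _ _).trans (List.drop_sublist _ _))
  have hlen : ((w.drop t).take n).length = n := by simp; omega
  simpa [hlen] using red_perm_range' hnodup

theorem red_window_injOn (hI : GreedyInvariant n w) (hL : w.length = n - 1 + k) :
    Set.InjOn (fun t => red ((w.drop t).take n)) (Set.Iio k) := fun t ht t' ht' heq =>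
  hI.red_window_injective t t' (by simp at ht; omega) (by simp at ht'; omega) heq

open scoped Classical in
theorem prefixCount_eq_card (hn : 1 ≤ n) (hI : GreedyInvariant n w) (hL : w.length = n - 1 + k)
    {q : List ℕ} (hq : q.Perm (List.range' 1 (n - 1))) :
    prefixCount w n k q = #{a ∈ Finset.Icc 1 n | covers w n (ext a q)} := by
  refine Eq.trans ?_ <| card_filter_proj_eq (red_window_injOn hI hL)
    (proj := fun p => red (p.take (n - 1)))
    (letter := fun p => p.getD (n - 1) 0) (fun t ht => ⟨getD_mem_Icc (perm_red_window hn hI hL ht)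
      (by omega), ext_getD_red_take hn (perm_red_window hn hI hL ht)⟩)
    (fun a ha => ⟨red_take_ext hq ha, getD_ext hq ha⟩) (fun a _ => covers_iff_exists_lt hn hL _)
  simp only [prefixCount, red_take_red, List.take_take, min_eq_left (Nat.sub_le n 1)]

open scoped Classical in
theorem suffixCount_eq_card (hn : 1 ≤ n) (hI : GreedyInvariant n w) (hL : w.length = n - 1 + k)
    {q : List ℕ} (hq : q.Perm (List.range' 1 (n - 1))) :
    suffixCount w n k q = #{a ∈ Finset.Icc 1 n | covers w n (consLetter a q)} := by
  refine Eq.trans ?_ <| card_filter_proj_eq (red_window_injOn hI hL)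
    (proj := fun p => red (p.drop 1))
    (letter := fun p => p.getD 0 0) (fun t ht => ⟨getD_mem_Icc (perm_red_window hn hI hL ht)
      (by omega), consLetter_getD_red_drop hn (perm_red_window hn hI hL ht)⟩)
    (fun a _ => ⟨by simp [consLetter, red_map_cshift, red_eq_self_of_perm hq], rfl⟩)
    (fun a _ => covers_iff_exists_lt hn hL _)
  simp only [suffixCount, red_drop_red, List.drop_take, List.drop_drop]

end Counting

/-! ### The greedy word covers every permutation -/

/-- The pattern of the factor following one with pattern `q`, when its new letter is the largest. -/
def slide (n : ℕ) (q : List ℕ) : List ℕ := red ((q ++ [n]).drop 1)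

theorem perm_slide {n : ℕ} {q : List ℕ} (hn : 1 ≤ n) (hq : q.Perm (List.range' 1 (n - 1))) :
    (slide n q).Perm (List.range' 1 (n - 1)) :=
  perm_red_drop (ext_eq_append_of_perm hn hq ▸ perm_ext hq (Finset.mem_Icc.mpr ⟨hn, le_rfl⟩))

theorem slide_red {n : ℕ} {u : List ℕ} (hu : u.length < n) {M : ℕ} (hM : ∀ x ∈ u, x < M) :
    slide n (red u) = red ((u ++ [M]).drop 1) := by
  have hN : ∀ x ∈ red u, x < n := fun x hx => by have := one_le_of_mem_red hx; omega
  rw [slide, ← red_drop_red, ← red_drop_red (u ++ [M]), red_append_singleton_of_forall_lt hN,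
    red_append_singleton_of_forall_lt hM, red_red, length_red]

theorem iterate_slide {n : ℕ} {q : List ℕ} (hq : q.Perm (List.range' 1 (n - 1))) :
    ∀ j ≤ n - 1, (slide n)^[j] q = red ((q ++ List.range' n j).drop j) := by
  have hlen : q.length = n - 1 := by simpa using hq.length_eq
  intro j
  induction j with
  | zero => simp [red_eq_self_of_perm hq]
  | succ j ih =>
    intro hj
    have hlt : ∀ x ∈ (q ++ List.range' n j).drop j, x < n + j := fun x hx => by
      rcases List.mem_append.mp (List.mem_of_mem_drop hx) with hx | hx
      · have := List.mem_range'_1.mp (hq.subset hx); omega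
      · have := List.mem_range'_1.mp hx; omega
    rw [Function.iterate_succ_apply', ih (by omega), slide_red (by simp; omega) hlt,
      ← List.drop_append_of_le_length (by simp), List.append_assoc, List.range'_1_concat,
      List.drop_drop]

theorem iterate_slide_eq_range' {n : ℕ} {q : List ℕ} (hq : q.Perm (List.range' 1 (n - 1))) :
    (slide n)^[n - 1] q = List.range' 1 (n - 1) := by
  rw [iterate_slide hq _ le_rfl, List.drop_append_of_le_length (by simp [hq.length_eq]),
    List.drop_eq_nil_of_le (by simp [hq.length_eq]), List.nil_append, red_range']

section Terminal

variable {n k : ℕ} {w : List ℕ}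

theorem red_window_eq_red_lastLetters (hL : w.length = n - 1 + k) :
    red ((w.drop k).take (n - 1)) = red (lastLetters n w) := by
  rw [lastLetters, show w.length - (n - 1) = k by omega, List.take_of_length_le (by simp; omega)]

theorem prefixCount_red_lastLetters (hn : 1 ≤ n) (hI : GreedyInvariant n w)
    (hL : w.length = n - 1 + k) (hstop : greedyStep n w = none) :
    prefixCount w n k (red (lastLetters n w)) = n := by
  classical
  rw [prefixCount_eq_card hn hI hL hI.perm_red_lastLetters, Finset.filter_true_of_mem,
    Nat.card_Icc, Nat.add_sub_cancel]
  intro a ha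
  rw [Finset.mem_Icc] at ha
  have hlen := hI.length_lastLetters
  rw [← red_ext hI.nodup_lastLetters ha.1 (by omega)]
  exact covers_of_greedyStep_eq_none hn hstop ha.1 (by omega)

theorem suffixCount_le (hn : 1 ≤ n) (hI : GreedyInvariant n w) (hL : w.length = n - 1 + k)
    {q : List ℕ} (hq : q.Perm (List.range' 1 (n - 1))) : suffixCount w n k q ≤ n := by
  classical
  rw [suffixCount_eq_card hn hI hL hq]
  exact (Finset.card_filter_le _ _).trans (by simp)

/-- The first and the last factor of length `n - 1` have the same pattern: otherwise the
last pattern would be the suffix of more than `n` factors of length `n`. -/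
theorem red_take_eq_red_lastLetters (hn : 1 ≤ n) (hI : GreedyInvariant n w)
    (hL : w.length = n - 1 + k) (hstop : greedyStep n w = none) :
    red (w.take (n - 1)) = red (lastLetters n w) := by
  have key := card_filter_range_add_ite (fun t => red ((w.drop t).take (n - 1))) k
    (red (lastLetters n w))
  simp only [red_window_eq_red_lastLetters hL, List.drop_zero, if_true] at key
  change prefixCount w n k _ + 1 = suffixCount w n k _ + _ at key
  have := suffixCount_le hn hI hL hI.perm_red_lastLetters
  rw [prefixCount_red_lastLetters hn hI hL hstop] at key
  by_contra hne
  rw [if_neg hne] at key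
  omega

theorem prefixCount_eq_suffixCount (hL : w.length = n - 1 + k)
    (hfirst : red (w.take (n - 1)) = red (lastLetters n w)) (q : List ℕ) :
    prefixCount w n k q = suffixCount w n k q := by
  have key := card_filter_range_add_ite (fun t => red ((w.drop t).take (n - 1))) k q
  simp only [red_window_eq_red_lastLetters hL, List.drop_zero, hfirst] at key
  exact Nat.add_right_cancel key

/-- If some extension of `q` is missing, so is `ext n q = q n`; its first letter then witnesses
that some left extension of `slide n q` is missing. -/
theorem prefixCount_slide_lt (hn : 1 ≤ n) (hI : GreedyInvariant n w) (hL : w.length = n - 1 + k)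
    (hbal : ∀ q, prefixCount w n k q = suffixCount w n k q) {q : List ℕ}
    (hq : q.Perm (List.range' 1 (n - 1))) (hP : prefixCount w n k q < n) :
    prefixCount w n k (slide n q) < n := by
  classical
  obtain ⟨a, ha, hmiss⟩ : ∃ a ∈ Finset.Icc 1 n, ¬ covers w n (ext a q) := by
    by_contra! hall
    rw [prefixCount_eq_card hn hI hL hq, Finset.filter_true_of_mem hall] at hP
    simp at hP
  have hmax : ¬ covers w n (q ++ [n]) := fun h => hmiss <| hI.covers_ext_of_le q hq n a
    (Finset.mem_Icc.mp ha).1 (Finset.mem_Icc.mp ha).2 le_rfl (ext_eq_append_of_perm hn hq ▸ h)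
  have hp : (q ++ [n]).Perm (List.range' 1 n) :=
    ext_eq_append_of_perm hn hq ▸ perm_ext hq (Finset.mem_Icc.mpr ⟨hn, le_rfl⟩)
  rw [hbal, suffixCount_eq_card hn hI hL (perm_slide hn hq)]
  refine card_filter_Icc_lt (getD_mem_Icc hp (show 0 < n from hn)) ?_
  rwa [slide, consLetter_getD_red_drop hn hp]

theorem prefixCount_iterate_slide_lt (hn : 1 ≤ n) (hI : GreedyInvariant n w)
    (hL : w.length = n - 1 + k) (hbal : ∀ q, prefixCount w n k q = suffixCount w n k q)
    {q : List ℕ} (hq : q.Perm (List.range' 1 (n - 1))) (hP : prefixCount w n k q < n) (j : ℕ) :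
    ((slide n)^[j] q).Perm (List.range' 1 (n - 1)) ∧ prefixCount w n k ((slide n)^[j] q) < n := by
  induction j with
  | zero => exact ⟨hq, hP⟩
  | succ j ih =>
    rw [Function.iterate_succ_apply']
    exact ⟨perm_slide hn ih.1, prefixCount_slide_lt hn hI hL hbal ih.1 ih.2⟩

theorem covers_of_prefixCount_range' (hn : 1 ≤ n) (hI : GreedyInvariant n w)
    (hL : w.length = n - 1 + k) (hbal : ∀ q, prefixCount w n k q = suffixCount w n k q)
    (hfull : prefixCount w n k (List.range' 1 (n - 1)) = n) {p : List ℕ}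
    (hp : p.Perm (List.range' 1 n)) : covers w n p := by
  classical
  by_contra hmiss
  have hq := perm_red_take hp
  have hP : prefixCount w n k (red (p.take (n - 1))) < n := by
    rw [prefixCount_eq_card hn hI hL hq]
    exact card_filter_Icc_lt (getD_mem_Icc hp (show n - 1 < n by omega))
      (by rwa [ext_getD_red_take hn hp])
  have := (prefixCount_iterate_slide_lt hn hI hL hbal hq hP (n - 1)).2
  rw [iterate_slide_eq_range' hq, hfull] at this
  exact lt_irrefl n this

end Terminal

end GreedyCover

/-- The output `Π'_n` of the greedy algorithm covers every `n`-permutation. -/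
theorem stmt5 (n : ℕ) (hn : 1 ≤ n) (k : ℕ) (hterm : terminatesAt n k) :
    ∀ p : List ℕ, p.Perm (List.range' 1 n) → covers (greedy n k) n p := by
  obtain ⟨hsteps, hstop⟩ := hterm
  obtain ⟨hI, hL⟩ := GreedyCover.greedyInvariant_greedy hn hsteps k le_rfl
  have hfirst := GreedyCover.red_take_eq_red_lastLetters hn hI hL hstop
  have hfull : GreedyCover.prefixCount (greedy n k) n k (List.range' 1 (n - 1)) = n := by
    rw [← hI.red_take, hfirst, GreedyCover.prefixCount_red_lastLetters hn hI hL hstop]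
  exact fun p hp => GreedyCover.covers_of_prefixCount_range' hn hI hL
    (GreedyCover.prefixCount_eq_suffixCount hL hfirst) hfull hp
end

section
/- In the greedy construction, Π'_{n,n−1} = n(n+1)⋯(2n−2)(n−1)(n−2)⋯1; that is, after the first n−1 steps, the word consists of the increasing run n, n+1, ..., 2n−2 followed by the decreasing run n−1, n−2, ..., 1. -/
/-! The invariant is `Π'_{n,k} = (k+1)(k+2)⋯(k+n-1) k(k-1)⋯1` for `k ≤ n-1`. At each step the
smallest extension, appending the letter `1`, is new: in it the first letter exceeds the `k+1`
letters of the decreasing tail, whereas the first letter of an earlier factor, starting at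
position `j+1 ≤ k`, exceeds only the `j+1` tail letters that factor contains. -/

lemma map_cshift_one {l : List ℕ} (h : ∀ x ∈ l, 1 ≤ x) : l.map (cshift 1) = l.map (· + 1) :=
  List.map_congr_left fun x hx => by have := h x hx; simp only [cshift]; split_ifs <;> omega

lemma nthSmallest_one_eq {l : List ℕ} {a : ℕ} (ha : a ∈ l) (hmin : ∀ x ∈ l, a ≤ x) :
    nthSmallest l 1 = a := by
  have hperm := List.perm_insertionSort (· ≤ ·) l
  have hsorted := List.pairwise_insertionSort (· ≤ ·) l
  obtain ⟨b, t, hbt⟩ : ∃ b t, l.insertionSort (· ≤ ·) = b :: t := by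
    cases h : l.insertionSort (· ≤ ·) with
    | nil => simp [h] at hperm; simp [hperm] at ha
    | cons b t => exact ⟨b, t, rfl⟩
  rw [hbt] at hperm hsorted
  have hab : a ≤ b := hmin b (hperm.mem_iff.mp List.mem_cons_self)
  have hba : b ≤ a := by
    rcases List.mem_cons.mp (hperm.mem_iff.mpr ha) with rfl | h
    · exact le_rfl
    · exact (List.pairwise_cons.mp hsorted).1 a h
  simp [nthSmallest, hbt, le_antisymm hba hab]

lemma red_getD_zero_cons_append {x : ℕ} {u v : List ℕ} (hu : ∀ y ∈ u, x < y)
    (hv : ∀ y ∈ v, y ≤ x) : (red (x :: (u ++ v))).getD 0 0 = v.length + 1 := by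
  have hu' : u.filter (· ≤ x) = [] :=
    List.filter_eq_nil_iff.mpr fun y hy => by simpa using hu y hy
  have hv' : v.filter (· ≤ x) = v := List.filter_eq_self.mpr fun y hy => by simpa using hv y hy
  simp [red, List.filter_append, hu', hv']

lemma covers_of_coversB {w : List ℕ} {n : ℕ} {p : List ℕ} (h : coversB w n p = true) :
    covers w n p := by
  obtain ⟨k, -, hk⟩ := List.any_eq_true.mp h
  simp only [Bool.and_eq_true, decide_eq_true_eq] at hk
  exact ⟨k, hk⟩

lemma greedyStep_eq_of_not_covers_ext_one {n : ℕ} {w : List ℕ}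
    (h : ¬ covers w n (red (ext 1 (w.drop (w.length - (n - 1)))))) :
    greedyStep n w = some (w.map (cshift (extb (w.drop (w.length - (n - 1))) 1)) ++
      [extb (w.drop (w.length - (n - 1))) 1]) := by
  have hfind : (List.range' 1 ((w.drop (w.length - (n - 1))).length + 1)).find?
      (fun i => ! coversB w n (red (ext i (w.drop (w.length - (n - 1)))))) = some 1 := by
    rw [List.range'_succ]
    exact List.find?_cons_of_pos (by simpa using mt covers_of_coversB h)
  simp only [greedyStep, hfind]

def upDown (m k : ℕ) : List ℕ := List.range' (k + 1) m ++ (List.range' 1 k).reverse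

lemma length_upDown (m k : ℕ) : (upDown m k).length = m + k := by
  simp [upDown]

lemma one_le_of_mem_upDown {m k x : ℕ} (hx : x ∈ upDown m k) : 1 ≤ x := by
  simp only [upDown, List.mem_append, List.mem_reverse, List.mem_range'_1] at hx
  omega

lemma drop_upDown {m k j : ℕ} (hj : j ≤ m) :
    (upDown m k).drop j = List.range' (k + 1 + j) (m - j) ++ (List.range' 1 k).reverse := by
  rw [upDown, List.drop_append_of_le_length (by simpa using hj), List.drop_range']
  simp

lemma map_cshift_one_upDown_append (m k : ℕ) :
    (upDown m k).map (cshift 1) ++ [1] = upDown m (k + 1) := by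
  rw [map_cshift_one fun _ => one_le_of_mem_upDown]
  simp only [upDown, List.map_append, List.map_reverse, List.range'_succ (s := 1) (n := k),
    List.reverse_cons, List.append_assoc, ← List.range'_succ_left]

lemma red_factor_upDown_getD_zero {m k j : ℕ} (hjk : j < k) (hjm : j < m) :
    (red (((upDown m k).drop j).take (m + 1))).getD 0 0 = j + 2 := by
  obtain ⟨r, hr⟩ : ∃ r, m - j = r + 1 := ⟨m - j - 1, by omega⟩
  have hfactor : ((upDown m k).drop j).take (m + 1) =
      (k + 1 + j) :: (List.range' (k + 2 + j) r ++ ((List.range' 1 k).reverse.take (j + 1))) := by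
    rw [drop_upDown hjm.le, hr, List.range'_succ, List.cons_append, List.take_succ_cons,
      show m = (List.range' (k + 1 + j + 1) r).length + (j + 1) by simp; omega,
      List.take_length_add_append]
    simp [Nat.add_right_comm]
  rw [hfactor, red_getD_zero_cons_append]
  · simp only [List.length_take, List.length_reverse, List.length_range']
    omega
  · intro y hy; simp only [List.mem_range'_1] at hy; omega
  · intro y hy
    have := List.mem_range'_1.mp (List.mem_reverse.mp (List.mem_of_mem_take hy))
    omega

lemma greedyStep_upDown {m k : ℕ} (hk : k < m) :
    greedyStep (m + 1) (upDown m k) = some (upDown m (k + 1)) := by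
  have hlast : (upDown m k).drop ((upDown m k).length - (m + 1 - 1)) = (upDown m k).drop k := by
    rw [length_upDown]; congr 1; omega
  have hextb : extb ((upDown m k).drop k) 1 = 1 := by
    rw [extb, if_pos (by simp [length_upDown]; omega)]
    refine nthSmallest_one_eq ?_ fun x hx => one_le_of_mem_upDown (List.mem_of_mem_drop hx)
    simp only [drop_upDown hk.le, List.mem_append, List.mem_reverse, List.mem_range'_1]
    omega
  have hext : ext 1 ((upDown m k).drop k) = ((upDown m (k + 1)).drop k).take (m + 1) := by
    rw [ext, hextb, List.map_drop, ← List.drop_append_of_le_length (by simp [length_upDown]),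
      map_cshift_one_upDown_append, List.take_of_length_le (by simp [length_upDown]; omega)]
  have hnew : ¬ covers (upDown m k) (m + 1) (red (ext 1 ((upDown m k).drop k))) := by
    rintro ⟨j, hj, hred⟩
    rw [length_upDown] at hj
    have hrank := congrArg (·.getD 0 0) hred
    simp only [hext] at hrank
    rw [red_factor_upDown_getD_zero (by omega : j < k) (by omega),
      red_factor_upDown_getD_zero (Nat.lt_succ_self k) hk] at hrank
    omega
  rw [greedyStep_eq_of_not_covers_ext_one (by rwa [hlast]), hlast, hextb,
    map_cshift_one_upDown_append]

lemma greedy_succ_eq_upDown {m k : ℕ} (hk : k ≤ m) : greedy (m + 1) k = upDown m k := by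
  induction k with
  | zero => simp [greedy, upDown]
  | succ k ih => rw [greedy, ih (by omega), greedyStep_upDown (by omega)]

theorem stmt8_general (n : ℕ) :
    greedy n (n - 1) = List.range' n (n - 1) ++ (List.range' 1 (n - 1)).reverse := by
  cases n with
  | zero => rfl
  | succ m => simpa [upDown] using greedy_succ_eq_upDown (le_refl m)

/-- After the first `n-1` steps, `Π'_{n,n-1} = n(n+1)⋯(2n-2)(n-1)(n-2)⋯1`. -/
theorem stmt8 (n : ℕ) (hn : 2 ≤ n) :
    greedy n (n - 1) = List.range' n (n - 1) ++ (List.range' 1 (n - 1)).reverse :=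
  stmt8_general n
end

section
/- In Π'_n = a₁a₂⋯a_{n!+n−1}, for every k ≥ n one has a_k < a₁ < a₂ < ⋯ < a_{n−1}. -/
/-!
A greedy step appends a letter `b` and shifts every letter `≥ b` up by one, so it keeps the
relative order of the old letters. Hence it suffices that every appended letter is at most the
current first letter `a₁`. Once the word has length `≥ 2n - 2`, its last `n - 1` letters all lie
below `a₁`, so every extension ends in a letter `≤ a₁`. Before that, the first extension, ending in
the smallest letter of the suffix (which is `≤ a₁`), is always new: it has a descent where the
suffix contains `a_{n-1} a_n`, while at that position every length-`n` factor of the word reads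
two letters of the increasing prefix `a₁ ⋯ a_{n-1}`.
-/

namespace List

variable {α : Type*} {l : List α} {a : α}

lemma getD_drop (m p : ℕ) : (l.drop m).getD p a = l.getD (m + p) a := by
  simp [getD_eq_getElem?_getD]

lemma getD_take {m p : ℕ} (h : p < m) : (l.take m).getD p a = l.getD p a := by
  simp [getD_eq_getElem?_getD, h]

lemma getD_mem {p : ℕ} (h : p < l.length) : l.getD p a ∈ l :=
  getD_eq_getElem _ _ h ▸ getElem_mem h

end List

lemma cshift_strictMono (b : ℕ) : StrictMono (cshift b) := by
  intro x y h
  unfold cshift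
  split_ifs <;> omega

lemma lt_cshift_of_le {b x : ℕ} (h : b ≤ x) : b < cshift b x := by
  unfold cshift
  split_ifs <;> omega

lemma length_filter_le_lt_of_lt {α : Type*} [LinearOrder α] {u : List α} {a c : α} (h : a < c)
    (hc : c ∈ u) : (u.filter (· ≤ a)).length < (u.filter (· ≤ c)).length := by
  have hsub : (u.filter (· ≤ a)).Sublist (u.filter (· ≤ c)) :=
    List.monotone_filter_right u fun x hx => by
      simp only [decide_eq_true_eq] at hx ⊢
      exact hx.trans h.le
  refine lt_of_le_of_ne hsub.length_le fun heq => ?_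
  have hmem : c ∈ u.filter (· ≤ c) := List.mem_filter.2 ⟨hc, by simp⟩
  rw [← hsub.eq_of_length heq, List.mem_filter, decide_eq_true_eq] at hmem
  exact h.not_ge hmem.2

lemma red_getD {u : List ℕ} {p : ℕ} (hp : p < u.length) :
    (red u).getD p 0 = (u.filter (· ≤ u.getD p 0)).length := by
  simp [red, List.getD_eq_getElem?_getD, hp]

lemma red_getD_lt_red_getD {u : List ℕ} {p q : ℕ} (hp : p < u.length) (hq : q < u.length)
    (h : u.getD p 0 < u.getD q 0) : (red u).getD p 0 < (red u).getD q 0 := by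
  rw [red_getD hp, red_getD hq]
  exact length_filter_le_lt_of_lt h (List.getD_mem hq)

lemma red_ne_of_lt_of_gt {u v : List ℕ} {p q : ℕ} (hp : p < u.length) (hq : q < u.length)
    (hlen : u.length = v.length) (hu : u.getD p 0 < u.getD q 0) (hv : v.getD q 0 < v.getD p 0) :
    red u ≠ red v := fun h => by
  have h₁ := red_getD_lt_red_getD hp hq hu
  have h₂ := red_getD_lt_red_getD (hlen ▸ hq) (hlen ▸ hp) hv
  rw [h] at h₁
  omega

lemma nthSmallest_mem {s : List ℕ} {i : ℕ} (hs : s ≠ []) (hi : i ≤ s.length) :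
    nthSmallest s i ∈ s := by
  have hlen : i - 1 < (s.insertionSort (· ≤ ·)).length := by
    rw [List.length_insertionSort]
    have := List.length_pos_iff.2 hs
    omega
  rw [nthSmallest, List.getD_eq_getElem _ _ hlen, ← List.mem_insertionSort (· ≤ ·)]
  exact List.getElem_mem hlen

lemma nthSmallest_one_le {s : List ℕ} {x : ℕ} (hx : x ∈ s) : nthSmallest s 1 ≤ x := by
  rw [← List.mem_insertionSort (· ≤ ·)] at hx
  have hsorted := List.pairwise_insertionSort (· ≤ ·) s
  rw [nthSmallest]
  generalize s.insertionSort (· ≤ ·) = l at hx hsorted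
  cases l with
  | nil => simp at hx
  | cons y t =>
    rcases List.mem_cons.1 hx with rfl | hx
    · simp
    · exact List.rel_of_pairwise_cons hsorted hx

lemma extb_le_of_forall_lt {s : List ℕ} {a : ℕ} (i : ℕ) (ha : 0 < a) (h : ∀ x ∈ s, x < a) :
    extb s i ≤ a := by
  unfold extb
  split_ifs with hi
  · rcases eq_or_ne s [] with rfl | hs
    · simp [nthSmallest]
    · exact (h _ (nthSmallest_mem hs hi)).le
  · have : s.foldr max ⊥ ≤ a - 1 := List.max_le_of_forall_le s _ fun x hx => by
      have := h x hx; omega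
    have : s.foldr max 0 ≤ a - 1 := this
    omega

def appendShift (b : ℕ) (w : List ℕ) : List ℕ := w.map (cshift b) ++ [b]

section appendShift

variable {b p : ℕ} {w : List ℕ}

@[simp]
lemma length_appendShift : (appendShift b w).length = w.length + 1 := by
  simp [appendShift]

lemma getD_appendShift_of_lt (h : p < w.length) :
    (appendShift b w).getD p 0 = cshift b (w.getD p 0) := by
  simp [appendShift, List.getD_eq_getElem?_getD, List.getElem?_append_left, h]

lemma getD_appendShift_length : (appendShift b w).getD w.length 0 = b := by
  simp [appendShift, List.getD_eq_getElem?_getD]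

lemma getD_appendShift_of_length_lt (h : w.length < p) : (appendShift b w).getD p 0 = 0 :=
  List.getD_eq_default _ _ (by simpa using h)

end appendShift

lemma ext_eq_appendShift (i : ℕ) (s : List ℕ) : ext i s = appendShift (extb s i) s := rfl

section greedyStep

variable {n : ℕ} {w w' : List ℕ}

lemma exists_extb_of_greedyStep_eq_some (h : greedyStep n w = some w') :
    ∃ i, w' = appendShift (extb (w.drop (w.length - (n - 1))) i) w := by
  unfold greedyStep at h
  dsimp only at h
  split at h
  · exact ⟨_, (Option.some.inj h).symm⟩
  · simp at h

lemma greedyStep_eq_of_not_covers (h : ¬ covers w n (red (ext 1 (w.drop (w.length - (n - 1)))))) :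
    greedyStep n w = some (appendShift (extb (w.drop (w.length - (n - 1))) 1) w) := by
  have hcov : coversB w n (red (ext 1 (w.drop (w.length - (n - 1))))) = false := by
    rw [Bool.eq_false_iff]
    intro hb
    simp only [coversB, List.any_eq_true, List.mem_range, Bool.and_eq_true,
      decide_eq_true_eq] at hb
    obtain ⟨k, -, hk⟩ := hb
    exact h ⟨k, hk⟩
  unfold greedyStep
  dsimp only
  rw [List.range'_succ, List.find?_cons_of_pos (by simp [hcov])]
  rfl

end greedyStep

/-- Indices are 0-based: `w.getD j 0` is `a_{j+1}`, and positions past the end read as `0`, so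
`getD_lt_head` also gives `0 < a₁`. -/
structure GreedyInvariant (n : ℕ) (w : List ℕ) : Prop where
  length_ge : n - 1 ≤ w.length
  getD_lt_getD_succ : ∀ j, j + 1 < n - 1 → w.getD j 0 < w.getD (j + 1) 0
  getD_lt_head : ∀ p, n - 1 ≤ p → w.getD p 0 < w.getD 0 0

namespace GreedyInvariant

variable {n : ℕ} {w w' : List ℕ}

lemma two_le (h : GreedyInvariant n w) : 2 ≤ n := by
  by_contra hn
  exact lt_irrefl _ (h.getD_lt_head 0 (by omega))

lemma head_le_getD (h : GreedyInvariant n w) : ∀ j < n - 1, w.getD 0 0 ≤ w.getD j 0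
  | 0, _ => le_rfl
  | j + 1, hj => (h.head_le_getD j (by omega)).trans (h.getD_lt_getD_succ j hj).le

lemma appendShift_of_le (h : GreedyInvariant n w) {b : ℕ} (hb : b ≤ w.getD 0 0) :
    GreedyInvariant n (appendShift b w) where
  length_ge := by
    have := h.length_ge
    simp only [length_appendShift]
    omega
  getD_lt_getD_succ j hj := by
    have := h.length_ge
    rw [getD_appendShift_of_lt (by omega), getD_appendShift_of_lt (by omega)]
    exact cshift_strictMono b (h.getD_lt_getD_succ j hj)
  getD_lt_head p hp := by
    have := h.length_ge
    have := h.two_le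
    rw [getD_appendShift_of_lt (p := 0) (by omega)]
    rcases lt_trichotomy p w.length with hpw | rfl | hpw
    · rw [getD_appendShift_of_lt hpw]
      exact cshift_strictMono b (h.getD_lt_head p hp)
    · rw [getD_appendShift_length]
      exact lt_cshift_of_le hb
    · rw [getD_appendShift_of_length_lt hpw]
      exact (Nat.zero_le b).trans_lt (lt_cshift_of_le hb)

lemma not_covers_ext_one (h : GreedyInvariant n w)
    (hshort : w.length + 3 ≤ 2 * n) :
    ¬ covers w n (red (ext 1 (w.drop (w.length - (n - 1))))) := by
  rintro ⟨k, hk, hred⟩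
  have hlen := h.length_ge
  set d := w.length - (n - 1)
  -- `q` is the position of `a_{n-1}` in the suffix `w.drop d`
  set q := n - 2 - d
  have hdesc : (ext 1 (w.drop d)).getD (q + 1) 0 < (ext 1 (w.drop d)).getD q 0 := by
    rw [ext_eq_appendShift, getD_appendShift_of_lt (by simp; omega),
      getD_appendShift_of_lt (by simp; omega), List.getD_drop, List.getD_drop,
      show d + (q + 1) = n - 1 by omega, show d + q = n - 2 by omega]
    have h₁ := h.getD_lt_head (n - 1) le_rfl
    have h₂ := h.head_le_getD (n - 2) (by omega)
    exact cshift_strictMono _ (by omega)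
  have hasc : ((w.drop k).take n).getD q 0 < ((w.drop k).take n).getD (q + 1) 0 := by
    rw [List.getD_take (by omega), List.getD_take (by omega), List.getD_drop, List.getD_drop]
    exact h.getD_lt_getD_succ (k + q) (by omega)
  exact red_ne_of_lt_of_gt (by simp; omega) (by simp; omega) (by simp [ext]; omega)
    hasc hdesc hred

lemma exists_appendShift_of_greedyStep (h : GreedyInvariant n w)
    (hstep : greedyStep n w = some w') : ∃ b ≤ w.getD 0 0, w' = appendShift b w := by
  have hlen := h.length_ge
  set d := w.length - (n - 1)
  by_cases hlong : 2 * n ≤ w.length + 2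
  · have hhead : 0 < w.getD 0 0 := (Nat.zero_le _).trans_lt (h.getD_lt_head (n - 1) le_rfl)
    obtain ⟨i, rfl⟩ := exists_extb_of_greedyStep_eq_some hstep
    refine ⟨_, extb_le_of_forall_lt i hhead fun x hx => ?_, rfl⟩
    obtain ⟨p, hp, rfl⟩ := List.getElem_of_mem hx
    rw [← List.getD_eq_getElem _ 0, List.getD_drop]
    exact h.getD_lt_head _ (by omega)
  · rw [greedyStep_eq_of_not_covers (h.not_covers_ext_one (by omega))] at hstep
    refine ⟨_, ?_, (Option.some.inj hstep).symm⟩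
    rw [extb, if_pos (by simp; omega)]
    obtain ⟨p, hp, hpa⟩ : ∃ p < (w.drop d).length, (w.drop d).getD p 0 ≤ w.getD 0 0 := by
      rcases Nat.eq_zero_or_pos d with hd0 | hd0
      · exact ⟨0, by simp; omega, by rw [hd0, List.drop_zero]⟩
      · refine ⟨n - 1 - d, by simp; omega, ?_⟩
        rw [List.getD_drop, show d + (n - 1 - d) = n - 1 by omega]
        exact (h.getD_lt_head (n - 1) le_rfl).le
    exact (nthSmallest_one_le (List.getD_mem hp)).trans hpa

end GreedyInvariant

lemma greedyInvariant_range' {n : ℕ} (hn : 2 ≤ n) : GreedyInvariant n (List.range' 1 (n - 1)) where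
  length_ge := by simp
  getD_lt_getD_succ j hj := by
    rw [List.getD_eq_getElem _ _ (by simp; omega), List.getD_eq_getElem _ _ (by simp; omega)]
    simp
  getD_lt_head p hp := by
    rw [List.getD_eq_default _ _ (by simpa using hp), List.getD_eq_getElem _ _ (by simp; omega)]
    simp

lemma greedyInvariant_greedy {n : ℕ} (hn : 2 ≤ n) : ∀ k, GreedyInvariant n (greedy n k)
  | 0 => greedyInvariant_range' hn
  | k + 1 => by
    have ih := greedyInvariant_greedy hn k
    rw [greedy]
    split
    · next w' hstep =>
      obtain ⟨b, hb, rfl⟩ := ih.exists_appendShift_of_greedyStep hstep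
      exact ih.appendShift_of_le hb
    · exact ih

theorem stmt9_general (n : ℕ) (hn : 2 ≤ n) (k : ℕ) :
    (∀ j, 1 ≤ j → j + 1 ≤ n - 1 →
      letter (greedy n k) j < letter (greedy n k) (j + 1)) ∧
    (∀ i, n ≤ i → i ≤ Nat.factorial n + n - 1 →
      letter (greedy n k) i < letter (greedy n k) 1) := by
  have h := greedyInvariant_greedy hn k
  refine ⟨fun j hj₁ hj₂ => ?_, fun i hi _ => h.getD_lt_head (i - 1) (by omega)⟩
  have := h.getD_lt_getD_succ (j - 1) (by omega)
  rwa [Nat.sub_add_cancel hj₁] at this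

/-- In `Π'_n = a₁⋯a_{n!+n-1}`: `a₁ < a₂ < ⋯ < a_{n-1}` and `a_k < a₁` for all
`n ≤ k ≤ n!+n-1`. -/
theorem stmt9 (n : ℕ) (hn : 2 ≤ n) (k : ℕ) (hterm : terminatesAt n k) :
    (∀ j, 1 ≤ j → j + 1 ≤ n - 1 →
      letter (greedy n k) j < letter (greedy n k) (j + 1)) ∧
    (∀ i, n ≤ i → i ≤ Nat.factorial n + n - 1 →
      letter (greedy n k) i < letter (greedy n k) 1) :=
  stmt9_general n hn k
end

section
/- If the greedy algorithm is started from any (n−1)-permutation other than the increasing permutation 12⋯(n−1), then its output does not cover the increasing n-permutation 12⋯n, and hence is not a universal word for n-permutations. -/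
/-- the greedy algorithm started from an arbitrary word `w0`. -/
def greedyFrom (n : ℕ) (w0 : List ℕ) : ℕ → List ℕ
  | 0 => w0
  | k + 1 =>
    match greedyStep n (greedyFrom n w0 k) with
    | some w => w
    | none => greedyFrom n w0 k

lemma cshift_ne_self (b x : ℕ) : cshift b x ≠ b := by
  unfold cshift
  split_ifs <;> omega

lemma cshift_le_self_iff (b x : ℕ) : cshift b x ≤ b ↔ x < b := by
  unfold cshift
  split_ifs <;> omega

@[simp] lemma length_red (w : List ℕ) : (red w).length = w.length := by
  simp [red]

lemma getElem_red (w : List ℕ) (i : ℕ) (h : i < (red w).length) :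
    (red w)[i] = (w.filter (· ≤ w[i]'(by simpa using h))).length := by
  simp [red]

lemma red_map_of_strictMono {f : ℕ → ℕ} (hf : StrictMono f) (w : List ℕ) :
    red (w.map f) = red w := by
  simp [red, List.filter_map, Function.comp_def, hf.le_iff_le]

lemma filter_le_sublist_filter_le (w : List ℕ) {x y : ℕ} (h : x ≤ y) :
    (w.filter (· ≤ x)).Sublist (w.filter (· ≤ y)) :=
  List.monotone_filter_right _ fun z hz => by simp only [decide_eq_true_eq] at hz ⊢; omega

lemma length_filter_le_lt_of_lt_s13 {w : List ℕ} {x y : ℕ} (hy : y ∈ w) (h : x < y) :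
    (w.filter (· ≤ x)).length < (w.filter (· ≤ y)).length := by
  have hsub := filter_le_sublist_filter_le w h.le
  refine lt_of_le_of_ne hsub.length_le fun heq => ?_
  have : y ∈ w.filter (· ≤ y) := by simpa using hy
  rw [← hsub.eq_of_length heq] at this
  simp only [List.mem_filter, decide_eq_true_eq] at this
  omega

lemma getElem_lt_getElem_iff_red {w : List ℕ} {a b : ℕ} (ha : a < w.length)
    (hb : b < w.length) :
    w[a] < w[b] ↔ (red w)[a]'(by simpa) < (red w)[b]'(by simpa) := by
  rw [getElem_red, getElem_red]
  refine ⟨length_filter_le_lt_of_lt_s13 (List.getElem_mem hb), fun h => ?_⟩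
  by_contra! hba
  exact (filter_le_sublist_filter_le w hba).length_le.not_gt h

section Sorted

lemma List.filter_eq_take_of_getElem_iff {α : Type*} {u : List α} {p : α → Bool} {m : ℕ}
    (h : ∀ i (hi : i < u.length), p u[i] ↔ i < m) : u.filter p = u.take m := by
  conv_lhs => rw [← List.take_append_drop m u]
  rw [List.filter_append, List.filter_eq_self.2, List.filter_eq_nil_iff.2, List.append_nil]
  · rintro _ hx
    obtain ⟨i, hi, rfl⟩ := List.mem_drop_iff_getElem.1 hx
    rw [h]; omega
  · rintro _ hx
    obtain ⟨i, hi, rfl⟩ := List.mem_take_iff_getElem.1 hx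
    rw [h]; omega

variable {u : List ℕ}

lemma List.SortedLT.length_filter_lt_getElem (hu : u.SortedLT) (j : ℕ) (hj : j < u.length) :
    (u.filter (· < u[j])).length = j := by
  rw [List.filter_eq_take_of_getElem_iff (m := j) (by simp [hu.getElem_lt_getElem_iff])]
  simp only [List.length_take]; omega

lemma List.SortedLT.length_filter_le_getElem (hu : u.SortedLT) (j : ℕ) (hj : j < u.length) :
    (u.filter (· ≤ u[j])).length = j + 1 := by
  rw [List.filter_eq_take_of_getElem_iff (m := j + 1) (by simp [hu.getElem_le_getElem_iff])]
  simp only [List.length_take]; omega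

lemma List.SortedLT.lt_getElem_iff_length_filter_le (hu : u.SortedLT) (a j : ℕ)
    (hj : j < u.length) : a < u[j] ↔ (u.filter (· ≤ a)).length ≤ j := by
  constructor
  · intro h
    have hsub : (u.filter (· ≤ a)).Sublist (u.filter (· < u[j])) :=
      List.monotone_filter_right u fun z hz => by simp only [decide_eq_true_eq] at hz ⊢; omega
    simpa only [hu.length_filter_lt_getElem j hj] using hsub.length_le
  · intro h
    by_contra! hle
    have := (filter_le_sublist_filter_le u hle).length_le
    rw [hu.length_filter_le_getElem j hj] at this
    omega

lemma sortedLT_iff_red_eq_range' : u.SortedLT ↔ red u = List.range' 1 u.length := by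
  constructor
  · intro hu
    refine List.ext_getElem (by simp) fun i h _ => ?_
    rw [getElem_red, hu.length_filter_le_getElem, List.getElem_range']
    omega
  · intro h
    refine List.sortedLT_iff_getElem_lt_getElem_of_lt.2 fun i j hi hj hij => ?_
    simp only [getElem_lt_getElem_iff_red, h, List.getElem_range']
    omega

lemma List.SortedLT.take_of_red_eq {v : List ℕ} (h : red u = red v) (t : ℕ)
    (hv : (v.take t).SortedLT) : (u.take t).SortedLT := by
  have hlen : u.length = v.length := by simpa using congrArg List.length h
  refine List.sortedLT_iff_getElem_lt_getElem_of_lt.2 fun i j hi hj hij => ?_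
  simp only [List.length_take] at hi hj
  have hvij := hv.getElem_lt_getElem_iff (i := i) (j := j)
    (hi := by simp only [List.length_take]; omega)
    (hj := by simp only [List.length_take]; omega) |>.2 hij
  simp only [List.getElem_take] at hvij ⊢
  rw [getElem_lt_getElem_iff_red] at hvij ⊢
  simpa only [h] using hvij

end Sorted

lemma red_cons_of_sortedLT {a : ℕ} {u : List ℕ} (hu : u.SortedLT) (ha : a ∉ u) :
    red (a :: u) = (1 + (u.filter (· ≤ a)).length) ::
      (List.range u.length).map fun j =>
        if j < (u.filter (· ≤ a)).length then j + 1 else j + 2 := by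
  refine List.ext_getElem (by simp) fun i h _ => ?_
  cases i with
  | zero => simp [getElem_red, Nat.add_comm]
  | succ j =>
    have hj : j < u.length := by simpa using h
    have hne : a ≠ u[j] := fun h => ha (h ▸ List.getElem_mem hj)
    have hlt := hu.lt_getElem_iff_length_filter_le a j hj
    simp only [getElem_red, List.getElem_cons_succ, List.filter_cons, List.getElem_map,
      List.getElem_range]
    split_ifs <;> simp_all [hu.length_filter_le_getElem j hj] <;> omega

lemma red_cons_eq_of_headD_eq {a a' : ℕ} {u u' : List ℕ} (hu : u.SortedLT) (hu' : u'.SortedLT)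
    (ha : a ∉ u) (ha' : a' ∉ u') (hlen : u.length = u'.length)
    (h : (red (a :: u)).headD 0 = (red (a' :: u')).headD 0) :
    red (a :: u) = red (a' :: u') := by
  rw [red_cons_of_sortedLT hu ha, red_cons_of_sortedLT hu' ha'] at h ⊢
  simp only [List.headD_cons, Nat.add_left_cancel_iff] at h
  rw [h, hlen]

lemma length_filter_lt_nthSmallest {s : List ℕ} (hs : s.Nodup) {j : ℕ} (hj1 : 1 ≤ j)
    (hj2 : j ≤ s.length) : (s.filter (· < nthSmallest s j)).length = j - 1 := by
  have hperm := List.perm_insertionSort (· ≤ ·) s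
  have hsort : (s.insertionSort (· ≤ ·)).SortedLT :=
    List.sortedLE_insertionSort.sortedLT_of_nodup (hperm.nodup_iff.2 hs)
  rw [nthSmallest, List.getD_eq_getElem _ _ (by rw [hperm.length_eq]; omega),
    ← (hperm.filter _).length_eq, hsort.length_filter_lt_getElem]

lemma take_ext (i : ℕ) (s : List ℕ) : (ext i s).take s.length = s.map (cshift (extb s i)) := by
  simp [ext]

lemma getLast_red_ext {s : List ℕ} (hs : s.Nodup) {j : ℕ} (hj1 : 1 ≤ j)
    (hj2 : j ≤ s.length) :
    (red (ext j s)).getD s.length 0 = j := by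
  have hb : extb s j = nthSmallest s j := if_pos hj2
  rw [List.getD_eq_getElem _ _ (by simp [ext]), getElem_red]
  simp [ext, List.filter_map, Function.comp_def, cshift_le_self_iff, hb,
    length_filter_lt_nthSmallest hs hj1 hj2]
  omega

lemma take_drop_map_append_of_add_le (w : List ℕ) (f : ℕ → ℕ) (c : ℕ) {k m : ℕ}
    (h : k + m ≤ w.length) : ((w.map f ++ [c]).drop k).take m = ((w.drop k).take m).map f := by
  rw [List.drop_append_of_le_length (by simp only [List.length_map]; omega),
    List.take_append_of_le_length (by simp only [List.length_drop, List.length_map]; omega),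
    List.map_take, List.map_drop]

lemma take_drop_length_sub (v : List ℕ) (m : ℕ) : (v.drop (v.length - m)).take m = v.rtake m :=
  List.take_of_length_le (by simp only [List.length_drop]; omega)

lemma rtake_map_append (w : List ℕ) (f : ℕ → ℕ) (c m : ℕ) :
    (w.map f ++ [c]).rtake (m + 1) = (w.rtake m).map f ++ [c] := by
  rw [List.rtake_concat_succ]
  simp [List.rtake, List.map_drop]

lemma take_drop_eq_cons (w : List ℕ) {p m : ℕ} (hp : p < w.length) :
    (w.drop p).take (m + 1) = w[p] :: (w.drop (p + 1)).take m := by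
  rw [List.drop_eq_getElem_cons hp, List.take_succ_cons]

lemma take_drop_map_append_of_length_lt (w : List ℕ) (f : ℕ → ℕ) (c : ℕ) {k m : ℕ}
    (hm : 1 ≤ m) (h1 : w.length < k + m) (h2 : k + m ≤ w.length + 1) :
    ((w.map f ++ [c]).drop k).take m = (w.rtake (m - 1)).map f ++ [c] := by
  obtain ⟨m, rfl⟩ : ∃ m', m = m' + 1 := ⟨m - 1, by omega⟩
  have hk : k = (w.map f ++ [c]).length - (m + 1) := by
    simp only [List.length_append, List.length_map, List.length_singleton]; omega
  rw [hk, take_drop_length_sub, Nat.add_sub_cancel, rtake_map_append]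

lemma nodup_map_cshift_append {w : List ℕ} (hw : w.Nodup) (b : ℕ) :
    (w.map (cshift b) ++ [b]).Nodup :=
  (hw.map (cshift_strictMono b).injective).append (List.nodup_singleton b)
    (by simp [cshift_ne_self])

lemma coversB_iff {w p : List ℕ} {n : ℕ} (hn : 1 ≤ n) : coversB w n p ↔ covers w n p := by
  simp only [coversB, covers, List.any_eq_true, List.mem_range, Bool.and_eq_true,
    decide_eq_true_eq]
  exact ⟨fun ⟨k, _, hk⟩ => ⟨k, hk⟩, fun ⟨k, hk⟩ => ⟨k, by omega, hk⟩⟩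

lemma greedyStep_eq_some {n : ℕ} {w v : List ℕ} (h : greedyStep n w = some v) :
    ∃ i, 1 ≤ i ∧ ¬ coversB w n (red (ext i (w.rtake (n - 1)))) ∧
      (∀ j, 1 ≤ j → j < i → coversB w n (red (ext j (w.rtake (n - 1))))) ∧
      v = w.map (cshift (extb (w.rtake (n - 1)) i)) ++ [extb (w.rtake (n - 1)) i] := by
  dsimp only [greedyStep] at h
  split at h
  · rename_i i hi
    simp only [List.find?_range'_eq_some, List.mem_range'_1, Bool.not_eq_eq_eq_not,
      Bool.not_true, Bool.not_false] at hi
    obtain ⟨hnot, ⟨hi1, -⟩, hmin⟩ := hi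
    exact ⟨i, hi1, by simpa [List.rtake] using hnot, hmin, (Option.some.inj h).symm⟩
  · simp at h

structure GreedyInvariant_s13 (n : ℕ) (w : List ℕ) : Prop where
  length_ge : n - 1 ≤ w.length
  nodup : w.Nodup
  not_sortedLT_take : ¬ (w.take (n - 1)).SortedLT
  red_ne : ∀ k₁ k₂, k₁ < k₂ → k₂ + n ≤ w.length →
    red ((w.drop k₁).take n) ≠ red ((w.drop k₂).take n)
  not_covers_range' : ¬ covers w n (List.range' 1 n)

def runStarts (n : ℕ) (w : List ℕ) : Finset ℕ :=
  (Finset.range (w.length - (n - 1) + 1)).filter fun p => ((w.drop p).take (n - 1)).SortedLT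

def headRank (n : ℕ) (w : List ℕ) (p : ℕ) : ℕ := (red ((w.drop (p - 1)).take n)).headD 0

namespace GreedyInvariant_s13

variable {n : ℕ} {w : List ℕ}

lemma two_le_s13 (G : GreedyInvariant_s13 n w) : 2 ≤ n := by
  by_contra! h
  exact G.not_sortedLT_take (by simpa [show n - 1 = 0 by omega] using List.Pairwise.nil.sortedLT)

lemma pos_of_mem_runStarts (G : GreedyInvariant_s13 n w) {p : ℕ} (hp : p ∈ runStarts n w) :
    1 ≤ p := by
  rw [Nat.one_le_iff_ne_zero]
  rintro rfl
  exact G.not_sortedLT_take (Finset.mem_filter.1 hp).2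

lemma exists_cons_of_mem_runStarts (G : GreedyInvariant_s13 n w) {p : ℕ} (hp : p ∈ runStarts n w) :
    p - 1 + n ≤ w.length ∧ ∃ a u, (w.drop (p - 1)).take n = a :: u ∧
      a ∉ u ∧ u.SortedLT ∧ u.length = n - 1 := by
  have h1 := G.pos_of_mem_runStarts hp
  have h2 := G.two_le_s13
  have h3 := G.length_ge
  obtain ⟨hlt, hsort⟩ := Finset.mem_filter.1 hp
  rw [Finset.mem_range] at hlt
  have hwin : (w.drop (p - 1)).take n = w[p - 1] :: (w.drop p).take (n - 1) := by
    obtain ⟨m, rfl⟩ : ∃ m, n = m + 1 := ⟨n - 1, by omega⟩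
    rw [take_drop_eq_cons w (by omega), Nat.sub_add_cancel h1, Nat.add_sub_cancel]
  have hnd := (((List.take_sublist _ _).trans (List.drop_sublist _ _)).nodup G.nodup :
    ((w.drop (p - 1)).take n).Nodup)
  rw [hwin, List.nodup_cons] at hnd
  refine ⟨by omega, _, _, hwin, hnd.1, hsort, ?_⟩
  simp only [List.length_take, List.length_drop]
  omega

lemma headRank_mem_Icc (G : GreedyInvariant_s13 n w) {p : ℕ} (hp : p ∈ runStarts n w) :
    headRank n w p ∈ Finset.Icc 2 n := by
  obtain ⟨hlen, a, u, hwin, ha, hu, hulen⟩ := G.exists_cons_of_mem_runStarts hp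
  have hrank : headRank n w p = 1 + (u.filter (· ≤ a)).length := by
    rw [headRank, hwin, red_cons_of_sortedLT hu ha, List.headD_cons]
  have hle := List.length_filter_le (· ≤ a) u
  have hpos : (u.filter (· ≤ a)).length ≠ 0 := by
    intro h0
    have hmin : ∀ x ∈ u, a < x := by
      simpa using List.filter_eq_nil_iff.1 (List.length_eq_zero_iff.1 h0)
    have hsorted : (a :: u).SortedLT :=
      (List.pairwise_cons.2 ⟨hmin, hu.pairwise⟩).sortedLT
    apply G.not_covers_range'
    refine ⟨p - 1, hlen, ?_⟩
    rw [hwin, sortedLT_iff_red_eq_range'.1 hsorted, List.length_cons, hulen,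
      Nat.sub_add_cancel (by have := G.two_le_s13; omega)]
  rw [hrank, Finset.mem_Icc]
  omega

lemma injOn_headRank (G : GreedyInvariant_s13 n w) : Set.InjOn (headRank n w) (runStarts n w) := by
  intro p hp q hq hpq
  obtain ⟨hplen, a, u, hpwin, ha, hu, hulen⟩ := G.exists_cons_of_mem_runStarts hp
  obtain ⟨hqlen, b, v, hqwin, hb, hv, hvlen⟩ := G.exists_cons_of_mem_runStarts hq
  have hred : red ((w.drop (p - 1)).take n) = red ((w.drop (q - 1)).take n) := by
    unfold headRank at hpq
    rw [hpwin, hqwin] at hpq ⊢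
    exact red_cons_eq_of_headD_eq hu hv ha hb (hulen.trans hvlen.symm) hpq
  have h1 := G.pos_of_mem_runStarts hp
  have h2 := G.pos_of_mem_runStarts hq
  by_contra hne
  rcases Nat.lt_or_gt_of_ne hne with h | h
  · exact G.red_ne (p - 1) (q - 1) (by omega) hqlen hred
  · exact G.red_ne (q - 1) (p - 1) (by omega) hplen hred.symm

lemma card_runStarts_le (G : GreedyInvariant_s13 n w) : (runStarts n w).card ≤ n - 1 := by
  simpa using Finset.card_le_card_of_injOn _ (fun p hp => G.headRank_mem_Icc hp) G.injOn_headRank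

lemma exists_not_covers_ext (G : GreedyInvariant_s13 n w) (hs : (w.rtake (n - 1)).SortedLT) :
    ∃ j, 1 ≤ j ∧ j ≤ n - 1 ∧ ¬ covers w n (red (ext j (w.rtake (n - 1)))) := by
  by_contra! hcov
  have hn := G.two_le_s13
  have hL := G.length_ge
  set s := w.rtake (n - 1)
  have hslen : s.length = n - 1 := by simp only [s, List.rtake, List.length_drop]; omega
  have hsnd : s.Nodup := G.nodup.sublist (List.drop_sublist _ _)
  set S := (runStarts n w).filter (· + n ≤ w.length)
  have hsurj : Set.SurjOn (fun p => (red ((w.drop p).take n)).getD (n - 1) 0) S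
      (Finset.Icc 1 (n - 1)) := by
    intro j hj
    rw [Finset.coe_Icc, Set.mem_Icc] at hj
    obtain ⟨k, hk, hred⟩ := hcov j hj.1 hj.2
    have hrun : ((w.drop k).take (n - 1)).SortedLT := by
      have := List.SortedLT.take_of_red_eq hred (n - 1) (by
        rw [← hslen, take_ext]; exact (cshift_strictMono _).sortedLT_listMap.2 hs)
      rwa [List.take_take, min_eq_left (by omega)] at this
    refine ⟨k, ?_, ?_⟩
    · simp only [S, runStarts, Finset.coe_filter, Finset.mem_filter, Finset.mem_range]
      exact ⟨⟨by omega, hrun⟩, hk⟩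
    · dsimp only
      rw [hred, ← hslen, getLast_red_ext hsnd hj.1 (by omega)]
  have hlast : w.length - (n - 1) ∈ runStarts n w := by
    simp only [runStarts, Finset.mem_filter, Finset.mem_range]
    exact ⟨by omega, by rwa [take_drop_length_sub]⟩
  have hS : S ⊂ runStarts n w := Finset.filter_ssubset.2 ⟨_, hlast, by omega⟩
  have h1 := Finset.card_le_card_of_surjOn _ hsurj
  have h2 := Finset.card_lt_card hS
  have h3 := G.card_runStarts_le
  rw [Nat.card_Icc] at h1
  omega

lemma red_ext_ne_range' (G : GreedyInvariant_s13 n w) {i : ℕ} (hi : 1 ≤ i)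
    (hcov : ∀ j, 1 ≤ j → j < i → covers w n (red (ext j (w.rtake (n - 1))))) :
    red (ext i (w.rtake (n - 1))) ≠ List.range' 1 n := by
  intro hred
  have hn := G.two_le_s13
  set s := w.rtake (n - 1)
  have hL := G.length_ge
  have hslen : s.length = n - 1 := by simp only [s, List.rtake, List.length_drop]; omega
  have hsorted : (ext i s).SortedLT := by
    rw [sortedLT_iff_red_eq_range', hred]
    simp only [ext, List.length_append, List.length_map, List.length_singleton, hslen,
      Nat.sub_add_cancel (by omega : 1 ≤ n)]
  have hs : s.SortedLT := by
    rw [← (cshift_strictMono (extb s i)).sortedLT_listMap, ← take_ext]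
    exact (hsorted.pairwise.sublist (List.take_sublist _ _)).sortedLT
  have hin : n ≤ i := by
    by_contra! hlt
    have := getLast_red_ext (G.nodup.sublist (List.drop_sublist _ _) : s.Nodup) hi
      (j := i) (by omega)
    rw [hred, hslen, List.getD_eq_getElem _ _ (by simp only [List.length_range']; omega),
      List.getElem_range'] at this
    omega
  obtain ⟨j, hj1, hj2, hj⟩ := G.exists_not_covers_ext hs
  exact hj (hcov j hj1 (by omega))

lemma of_greedyStep_eq_some (G : GreedyInvariant_s13 n w) {v : List ℕ}
    (h : greedyStep n w = some v) : GreedyInvariant_s13 n v := by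
  have hn := G.two_le_s13
  have hL := G.length_ge
  obtain ⟨i, hi, hnew, hold, rfl⟩ := greedyStep_eq_some h
  set s := w.rtake (n - 1)
  rw [coversB_iff (by omega)] at hnew
  simp only [coversB_iff (show 1 ≤ n by omega)] at hold
  have hlast : ∀ k, w.length < k + n → k + n ≤ w.length + 1 →
      ((w.map (cshift (extb s i)) ++ [extb s i]).drop k).take n = ext i s := by
    intro k h1 h2
    rw [take_drop_map_append_of_length_lt _ _ _ (by omega) h1 h2]
    rfl
  have hold_red : ∀ k, k + n ≤ w.length →
      red (((w.map (cshift (extb s i)) ++ [extb s i]).drop k).take n) =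
        red ((w.drop k).take n) := by
    intro k hk
    rw [take_drop_map_append_of_add_le _ _ _ hk, red_map_of_strictMono (cshift_strictMono _)]
  constructor
  · simp only [List.length_append, List.length_map, List.length_singleton]; omega
  · exact nodup_map_cshift_append G.nodup _
  · rw [List.take_append_of_le_length (by simpa using hL), ← List.map_take,
      (cshift_strictMono _).sortedLT_listMap]
    exact G.not_sortedLT_take
  · intro k₁ k₂ h12 hk₂
    simp only [List.length_append, List.length_map, List.length_singleton] at hk₂
    rw [hold_red k₁ (by omega)]
    by_cases hk : k₂ + n ≤ w.length
    · rw [hold_red k₂ hk]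
      exact G.red_ne k₁ k₂ h12 hk
    · rw [hlast k₂ (by omega) hk₂]
      exact fun heq => hnew ⟨k₁, by omega, heq⟩
  · rintro ⟨k, hk, hred⟩
    simp only [List.length_append, List.length_map, List.length_singleton] at hk
    by_cases hk' : k + n ≤ w.length
    · exact G.not_covers_range' ⟨k, hk', hold_red k hk' ▸ hred⟩
    · rw [hlast k (by omega) hk] at hred
      exact G.red_ext_ne_range' hi hold hred

end GreedyInvariant_s13

lemma greedyInvariant_of_perm {n : ℕ} {w0 : List ℕ} (hw0 : w0.Perm (List.range' 1 (n - 1)))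
    (hne : w0 ≠ List.range' 1 (n - 1)) : GreedyInvariant_s13 n w0 := by
  have hlen : w0.length = n - 1 := by simp [hw0.length_eq]
  have hn : 2 ≤ n := by
    by_contra! h
    rw [show n - 1 = 0 by omega] at hw0 hne
    exact hne (List.perm_nil.1 hw0)
  refine ⟨hlen.ge, hw0.nodup_iff.2 List.nodup_range', fun hsort => hne ?_, ?_, ?_⟩
  · rw [← hlen, List.take_length] at hsort
    exact hsort.eq_of_mem_iff (List.sortedLT_range' _ _ one_ne_zero) fun _ => hw0.mem_iff
  · intro k₁ k₂ h12 hk₂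
    omega
  · rintro ⟨k, hk, -⟩
    omega

lemma greedyInvariant_greedyFrom {n : ℕ} {w0 : List ℕ} (h0 : GreedyInvariant_s13 n w0) (k : ℕ) :
    GreedyInvariant_s13 n (greedyFrom n w0 k) := by
  induction k with
  | zero => exact h0
  | succ k ih =>
    rw [greedyFrom]
    split
    · exact ih.of_greedyStep_eq_some ‹_›
    · exact ih

theorem stmt13_general (n : ℕ) (w0 : List ℕ)
    (hw0 : w0.Perm (List.range' 1 (n - 1))) (hne : w0 ≠ List.range' 1 (n - 1))
    (k : ℕ) :
    ¬ covers (greedyFrom n w0 k) n (List.range' 1 n) ∧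
    ¬ (∀ p : List ℕ, p.Perm (List.range' 1 n) →
        ∃! j, j + n ≤ (greedyFrom n w0 k).length ∧
          red (((greedyFrom n w0 k).drop j).take n) = p) := by
  have hnot := (greedyInvariant_greedyFrom (greedyInvariant_of_perm hw0 hne) k).not_covers_range'
  refine ⟨hnot, fun h => ?_⟩
  obtain ⟨j, hj, -⟩ := h _ (List.Perm.refl _)
  exact hnot ⟨j, hj⟩

/-- If the greedy algorithm is started from an `(n-1)`-permutation other than
`12⋯(n-1)`, then its output does not cover `12⋯n`, hence is not a universal
word for `n`-permutations. -/
theorem stmt13 (n : ℕ) (hn : 2 ≤ n) (w0 : List ℕ)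
    (hw0 : w0.Perm (List.range' 1 (n - 1))) (hne : w0 ≠ List.range' 1 (n - 1))
    (k : ℕ)
    (hrun : ∀ j < k, greedyStep n (greedyFrom n w0 j) ≠ none)
    (hterm : greedyStep n (greedyFrom n w0 k) = none) :
    ¬ covers (greedyFrom n w0 k) n (List.range' 1 n) ∧
    ¬ (∀ p : List ℕ, p.Perm (List.range' 1 n) →
        ∃! j, j + n ≤ (greedyFrom n w0 k).length ∧
          red (((greedyFrom n w0 k).drop j).take n) = p) :=
  stmt13_general n w0 hw0 hne k
end
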